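/- arXiv:2210.05367 — 4 statements merged into one kernel-verified Lean document; each statement's English description precedes it below -/
import Mathlib

section
/- Let U_a and U_{-a} be finite nonempty sets, let Q : U_a × U_{-a} → ℝ have a unique maximizer (u_a*, u_{-a}*) (i.e. Q(u_a*, u_{-a}*) > Q(v, w) for all (v, w) ≠ (u_a*, u_{-a}*)), let Q_max = Q(u_a*, u_{-a}*) and Q_sec = max over all (v, w) ≠ (u_a*, u_{-a}*) of Q(v, w). Let π_{-a} : U_{-a} → ℝ be a probability distribution with π_{-a}(u_{-a}*) > 0, let β > 0, c ∈ ℝ, and define the polarized marginal M^PPG(v) = Σ_{w ∈ U_{-a}} π_{-a}(w) · (1/β) · exp(α · (Q(v, w) − c)). If α > log(π_{-a}(u_{-a}*)) / (Q_sec − Q_max), then for every v ∈ U_a with v ≠ u_a*, M^PPG(v) < M^PPG(u_a*). -/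
/-- Theorem 1 (Optimality Consistency): if the enlargement factor `α` exceeds
`log (pb ub*) / (Qsec − Qmax)`, then the polarized marginal
`M v = Σ_w pb w · (1/β) · exp (α (Q (v, w) − c))` is strictly maximized at the
optimal individual action `ua*`. -/
theorem optimality_consistency
    {Ua Ub : Type*} [Fintype Ua] [Fintype Ub] [Nonempty Ua] [Nonempty Ub]
    (Q : Ua × Ub → ℝ) (uaStar : Ua) (ubStar : Ub)
    -- unique maximizer
    (hQmax : ∀ p : Ua × Ub, p ≠ (uaStar, ubStar) → Q p < Q (uaStar, ubStar))
    -- Qsec is the maximum of Q over all pairs other than the maximizer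
    (Qsec : ℝ)
    (hQsec_ub : ∀ p : Ua × Ub, p ≠ (uaStar, ubStar) → Q p ≤ Qsec)
    (hQsec_mem : ∃ p : Ua × Ub, p ≠ (uaStar, ubStar) ∧ Q p = Qsec)
    -- pb is a probability distribution on Ub with positive mass at ubStar
    (pb : Ub → ℝ) (hpb_nonneg : ∀ w, 0 ≤ pb w) (hpb_sum : ∑ w, pb w = 1)
    (hpb_pos : 0 < pb ubStar)
    (α β c : ℝ) (hβ : 0 < β)
    (hα : α > Real.log (pb ubStar) / (Qsec - Q (uaStar, ubStar)))
    -- the polarized marginal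
    (M : Ua → ℝ)
    (hM : ∀ v, M v = ∑ w, pb w * ((1 / β) * Real.exp (α * (Q (v, w) - c)))) :
    ∀ v : Ua, v ≠ uaStar → M v < M uaStar := by
  intro v hv
  set Qmax := Q (uaStar, ubStar) with hQmaxdef
  have hQsec_lt : Qsec < Qmax := by
    obtain ⟨p, hp, hpe⟩ := hQsec_mem
    rw [← hpe]; exact hQmax p hp
  have hd : Qsec - Qmax < 0 := by linarith
  have key : α * (Qsec - Qmax) < Real.log (pb ubStar) :=
    (div_lt_iff_of_neg hd).mp hα
  -- pb ubStar ≤ 1, so log ≤ 0, so α > 0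
  have hpb_le_one : pb ubStar ≤ 1 := by
    rw [← hpb_sum]
    exact Finset.single_le_sum (fun i _ => hpb_nonneg i) (Finset.mem_univ ubStar)
  have hlog_nonpos : Real.log (pb ubStar) ≤ 0 := Real.log_nonpos (le_of_lt hpb_pos) hpb_le_one
  have hα_pos : 0 < α :=
    lt_of_le_of_lt (div_nonneg_iff.mpr (Or.inr ⟨hlog_nonpos, hd.le⟩)) hα
  have hβinv : (0:ℝ) < 1 / β := by positivity
  -- upper bound on M v
  have h1 : M v ≤ (1 / β) * Real.exp (α * (Qsec - c)) := by
    rw [hM v]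
    calc ∑ w, pb w * ((1 / β) * Real.exp (α * (Q (v, w) - c)))
        ≤ ∑ w, pb w * ((1 / β) * Real.exp (α * (Qsec - c))) := by
          apply Finset.sum_le_sum
          intro w _
          apply mul_le_mul_of_nonneg_left _ (hpb_nonneg w)
          apply mul_le_mul_of_nonneg_left _ (le_of_lt hβinv)
          apply Real.exp_le_exp.mpr
          have hQle : Q (v, w) ≤ Qsec := by
            apply hQsec_ub
            intro hcontra
            exact hv (congrArg Prod.fst hcontra)
          nlinarith
      _ = (1 / β) * Real.exp (α * (Qsec - c)) := by
          rw [← Finset.sum_mul, hpb_sum, one_mul]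
  -- lower bound on M uaStar
  have h2 : pb ubStar * ((1 / β) * Real.exp (α * (Qmax - c))) ≤ M uaStar := by
    rw [hM uaStar, hQmaxdef]
    exact Finset.single_le_sum
      (f := fun w => pb w * (1 / β * Real.exp (α * (Q (uaStar, w) - c))))
      (fun w _ => mul_nonneg (hpb_nonneg w) (mul_nonneg hβinv.le (Real.exp_nonneg _))) (Finset.mem_univ ubStar)
  -- middle strict inequality
  have hmid : (1 / β) * Real.exp (α * (Qsec - c))
      < pb ubStar * ((1 / β) * Real.exp (α * (Qmax - c))) := by
    have hexp : Real.exp (α * (Qsec - c)) < pb ubStar * Real.exp (α * (Qmax - c)) := by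
      rw [← Real.exp_log hpb_pos, ← Real.exp_add, Real.exp_lt_exp]
      nlinarith
    calc (1 / β) * Real.exp (α * (Qsec - c))
        < (1 / β) * (pb ubStar * Real.exp (α * (Qmax - c))) := by
          exact mul_lt_mul_of_pos_left hexp hβinv
      _ = pb ubStar * ((1 / β) * Real.exp (α * (Qmax - c))) := by ring
  linarith
end

section
/- Let U_a and U_{-a} be finite nonempty sets, let Q : U_a × U_{-a} → ℝ have a unique maximizer (u_a*, u_{-a}*), and let π_{-a} : U_{-a} → ℝ be a probability distribution with π_{-a}(u_{-a}*) > 0. Then there exists α₀ ≥ 0 such that for every α > α₀, the function M_α(v) = Σ_{w ∈ U_{-a}} π_{-a}(w)·exp(α·Q(v, w)) satisfies M_α(v) < M_α(u_a*) for every v ∈ U_a with v ≠ u_a*. -/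
/-- Corollary of Theorem 1 (Optimality Consistency): as long as the other
agents' policy puts positive probability on their optimal joint action, there
exists a threshold `α₀ ≥ 0` such that for every enlargement factor `α > α₀`
the polarized marginal is uniquely maximized at the optimal individual
action. -/
theorem exists_enlargement_factor
    {Ua Ub : Type*} [Fintype Ua] [Fintype Ub] [Nonempty Ua] [Nonempty Ub]
    (Q : Ua × Ub → ℝ) (uaStar : Ua) (ubStar : Ub)
    -- unique maximizer
    (hQmax : ∀ p : Ua × Ub, p ≠ (uaStar, ubStar) → Q p < Q (uaStar, ubStar))
    -- pb is a probability distribution on Ub with positive mass at ubStar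
    (pb : Ub → ℝ) (hpb_nonneg : ∀ w, 0 ≤ pb w) (hpb_sum : ∑ w, pb w = 1)
    (hpb_pos : 0 < pb ubStar) :
    ∃ α₀ : ℝ, 0 ≤ α₀ ∧ ∀ α : ℝ, α > α₀ → ∀ v : Ua, v ≠ uaStar →
      (∑ w, pb w * Real.exp (α * Q (v, w))) <
        ∑ w, pb w * Real.exp (α * Q (uaStar, w)) := by
  set Qs := Q (uaStar, ubStar) with hQs
  classical
  by_cases hex : ∃ v : Ua, v ≠ uaStar
  · obtain ⟨v₀, hv₀⟩ := hex
    set S : Finset (Ua × Ub) := Finset.univ.filter (fun p => p.1 ≠ uaStar) with hS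
    have hSne : S.Nonempty := ⟨(v₀, Classical.arbitrary Ub), by simp [hS, hv₀]⟩
    set c : ℝ := S.sup' hSne Q with hc
    have hclt : c < Qs := by
      apply (Finset.sup'_lt_iff hSne).mpr
      intro p hp
      apply hQmax
      intro h
      have : p.1 ≠ uaStar := by simpa [hS] using hp
      exact this (by rw [h])
    have hmem : ∀ v : Ua, v ≠ uaStar → ∀ w : Ub, Q (v, w) ≤ c := by
      intro v hv w
      exact Finset.le_sup' Q (by simp [hS, hv])
    refine ⟨max 0 ((-Real.log (pb ubStar)) / (Qs - c)), le_max_left _ _, ?_⟩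
    intro α hα v hv
    have hα0 : 0 < α := lt_of_le_of_lt (le_max_left _ _) hα
    have hdpos : 0 < Qs - c := by linarith
    have hkey : -Real.log (pb ubStar) < α * (Qs - c) := by
      have h1 : (-Real.log (pb ubStar)) / (Qs - c) < α :=
        lt_of_le_of_lt (le_max_right _ _) hα
      calc -Real.log (pb ubStar) = ((-Real.log (pb ubStar)) / (Qs - c)) * (Qs - c) := by
            field_simp
        _ < α * (Qs - c) := by
            exact mul_lt_mul_of_pos_right h1 hdpos
    have hLHS : (∑ w, pb w * Real.exp (α * Q (v, w))) ≤ Real.exp (α * c) := by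
      calc (∑ w, pb w * Real.exp (α * Q (v, w)))
          ≤ ∑ w, pb w * Real.exp (α * c) := by
            apply Finset.sum_le_sum
            intro w _
            exact mul_le_mul_of_nonneg_left
              (Real.exp_le_exp.mpr (mul_le_mul_of_nonneg_left (hmem v hv w) hα0.le))
              (hpb_nonneg w)
        _ = Real.exp (α * c) := by rw [← Finset.sum_mul, hpb_sum, one_mul]
    have hmid : Real.exp (α * c) < pb ubStar * Real.exp (α * Qs) := by
      rw [← Real.exp_log hpb_pos, ← Real.exp_add]
      apply Real.exp_lt_exp.mpr
      nlinarith
    have hRHS : pb ubStar * Real.exp (α * Qs) ≤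
        ∑ w, pb w * Real.exp (α * Q (uaStar, w)) := by
      have := Finset.single_le_sum
        (f := fun w => pb w * Real.exp (α * Q (uaStar, w)))
        (fun w _ => mul_nonneg (hpb_nonneg w) (Real.exp_nonneg _))
        (Finset.mem_univ ubStar)
      simpa [hQs] using this
    linarith
  · exact ⟨0, le_refl 0, fun α _ v hv => absurd ⟨v, hv⟩ hex⟩
end

section
/- Let U be a finite nonempty set and let M : U → ℝ have a unique maximizer u* (i.e. M(u*) > M(u) for all u ≠ u*). Let γ ∈ [0, 1) and suppose 0 ≤ M(u) ≤ 1/(1 − γ) for all u ∈ U. Define the softmax policy π_ψ(u) = exp(ψ(u))/Σ_{u'} exp(ψ(u')) and V(ψ) = Σ_u π_ψ(u)·M(u). Let 0 < η ≤ (1 − γ)³/8 and let the iterates be ψ⁰ : U → ℝ arbitrary and ψ^{t+1}(u) = ψ^t(u) + η·π_{ψ^t}(u)·(M(u) − V(ψ^t)) for all u ∈ U (i.e. gradient ascent on V with stepsize η). Then π_{ψ^t}(u*) → 1 as t → ∞; in particular π_{ψ^t} converges to the deterministic policy π* whose unique maximizing action is u* = arg max_u M(u). -/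
lemma ippAux1 (a c : ℝ) (ha : 0 ≤ a) (h1 : |a * c| ≤ 1) :
    a * c ^ 2 / Real.exp 1 ≤ (Real.exp (a * c) - 1) * c := by
  have he1 : (1:ℝ) ≤ Real.exp 1 := by have := Real.add_one_le_exp 1; linarith
  have hepos : (0:ℝ) < Real.exp 1 := Real.exp_pos 1
  rcases le_or_gt 0 c with hc | hc
  · have hx : a * c ≤ Real.exp (a * c) - 1 := by have := Real.add_one_le_exp (a * c); linarith
    have h2 : a * c ^ 2 ≤ (Real.exp (a * c) - 1) * c := by nlinarith
    have h4 : a * c ^ 2 / Real.exp 1 ≤ a * c ^ 2 := by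
      apply div_le_self (by positivity) he1
    linarith
  · -- c < 0, x := a*c ≤ 0, x ≥ -1
    have hx0 : a * c ≤ 0 := mul_nonpos_of_nonneg_of_nonpos ha hc.le
    have hxm1 : -1 ≤ a * c := by
      rcases abs_le.mp h1 with ⟨h, _⟩; linarith
    have h3 : -(a*c) ≤ Real.exp (-(a*c)) - 1 := by have := Real.add_one_le_exp (-(a*c)); linarith
    have h4 : Real.exp (-1) ≤ Real.exp (a*c) := Real.exp_le_exp.mpr hxm1
    have h5 : 1 - Real.exp (a*c) ≥ Real.exp (a*c) * (-(a*c)) := by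
      have := Real.exp_pos (a*c)
      have hid : Real.exp (a*c) * Real.exp (-(a*c)) = 1 := by
        rw [← Real.exp_add]; simp
      nlinarith
    have h6 : Real.exp (a*c) * (-(a*c)) ≥ Real.exp (-1) * (-(a*c)) := by nlinarith
    have h7 : Real.exp (-1) = 1 / Real.exp 1 := by
      rw [Real.exp_neg]; ring
    have h8 : 1 - Real.exp (a*c) ≥ (-(a*c)) / Real.exp 1 := by
      rw [div_eq_mul_inv]
      have : Real.exp (-1) * (-(a*c)) = (-(a*c)) * (Real.exp 1)⁻¹ := by
        rw [h7]; ring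
      linarith [h5, h6, this ▸ h6]
    -- (e^x - 1)*c = (1 - e^x)*(-c) ≥ ((-x)/e)*(-c) = a*c^2/e
    have hgoal : (Real.exp (a*c) - 1) * c = (1 - Real.exp (a*c)) * (-c) := by ring
    rw [hgoal]
    have h9 : (1 - Real.exp (a*c)) * (-c) ≥ ((-(a*c)) / Real.exp 1) * (-c) := by nlinarith
    have h10 : ((-(a*c)) / Real.exp 1) * (-c) = a * c^2 / Real.exp 1 := by ring
    linarith [h10 ▸ h9]

lemma ippAux2 (x : ℝ) (hx : x ≤ 1) : Real.exp x ≤ 1 + x + x ^ 2 := by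
  rcases le_or_gt (-1) x with h | h
  · have habs : |x| ≤ 1 := abs_le.mpr ⟨h, hx⟩
    have := Real.exp_bound habs (n := 2) (by norm_num)
    have hsum : ∑ m ∈ Finset.range 2, x ^ m / (m.factorial : ℝ) = 1 + x := by
      simp [Finset.sum_range_succ]
    rw [hsum] at this
    have h2 : |x| ^ 2 * ((2:ℕ).succ / ((2:ℕ).factorial * (2:ℕ))) = x^2 * (3/4) := by
      rw [sq_abs]; norm_num [Nat.factorial]
    rw [h2] at this
    have := abs_le.mp this
    nlinarith [this.2]
  · have h1 : Real.exp x < 1 := by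
      rw [← Real.exp_zero]; exact Real.exp_lt_exp.mpr (by linarith)
    nlinarith


set_option maxHeartbeats 1000000 in
/-- Lemma 1 (Individual Policy Improvement): softmax policy gradient ascent on
`V ψ = Σ_u softmax(ψ)(u) · M u` with stepsize `0 < η ≤ (1 − γ)³ / 8` drives the
softmax policy to the deterministic policy concentrated on the unique maximizer
`u*` of `M`: the probability of `u*` tends to `1` and that of every other
action tends to `0`. -/
theorem individual_policy_improvement
    {U : Type*} [Fintype U] [Nonempty U]
    (M : U → ℝ) (uStar : U)
    -- unique maximizer of M
    (hmax : ∀ u : U, u ≠ uStar → M u < M uStar)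
    (γ : ℝ) (hγ0 : 0 ≤ γ) (hγ1 : γ < 1)
    (hM0 : ∀ u, 0 ≤ M u) (hM1 : ∀ u, M u ≤ 1 / (1 - γ))
    (η : ℝ) (hη0 : 0 < η) (hη : η ≤ (1 - γ) ^ 3 / 8)
    -- the logits, softmax policies and values along gradient ascent
    (ψ : ℕ → U → ℝ)
    (pol : ℕ → U → ℝ)
    (hpol : ∀ t u, pol t u = Real.exp (ψ t u) / ∑ u', Real.exp (ψ t u'))
    (V : ℕ → ℝ)
    (hV : ∀ t, V t = ∑ u, pol t u * M u)
    -- gradient ascent update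
    (hupd : ∀ t u, ψ (t + 1) u = ψ t u + η * (pol t u * (M u - V t))) :
    Filter.Tendsto (fun t => pol t uStar) Filter.atTop (nhds 1) ∧
      ∀ u : U, u ≠ uStar →
        Filter.Tendsto (fun t => pol t u) Filter.atTop (nhds 0) := by
  classical
  have h1γ : (0:ℝ) < 1 - γ := by linarith
  set R : ℝ := 1 / (1 - γ) with hRdef
  have hRpos : 0 < R := by positivity
  set D : ℕ → ℝ := fun t => ∑ u', Real.exp (ψ t u') with hDdef
  have hDpos : ∀ t, 0 < D t := fun t =>
    Finset.sum_pos (fun u _ => Real.exp_pos _) Finset.univ_nonempty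
  have hpolD : ∀ t u, pol t u = Real.exp (ψ t u) / D t := hpol
  have hpolpos : ∀ t u, 0 < pol t u := by
    intro t u; rw [hpolD]; exact div_pos (Real.exp_pos _) (hDpos t)
  have hpolsum : ∀ t, ∑ u, pol t u = 1 := by
    intro t
    have : ∑ u, pol t u = (∑ u, Real.exp (ψ t u)) / D t := by
      rw [Finset.sum_div]; exact Finset.sum_congr rfl fun u _ => hpolD t u
    rw [this]; exact div_self (hDpos t).ne'
  have hpolle : ∀ t u, pol t u ≤ 1 := by
    intro t u
    calc pol t u ≤ ∑ u', pol t u' :=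
          Finset.single_le_sum (fun u' _ => (hpolpos t u').le) (Finset.mem_univ u)
      _ = 1 := hpolsum t
  have hVstar : ∀ t, V t ≤ M uStar := by
    intro t
    rw [hV]
    calc ∑ u, pol t u * M u ≤ ∑ u, pol t u * M uStar := by
          apply Finset.sum_le_sum
          intro u _
          apply mul_le_mul_of_nonneg_left _ (hpolpos t u).le
          rcases eq_or_ne u uStar with rfl | h
          · exact le_refl _
          · exact (hmax u h).le
      _ = M uStar := by rw [← Finset.sum_mul, hpolsum, one_mul]
  have hV0 : ∀ t, 0 ≤ V t := by
    intro t; rw [hV]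
    exact Finset.sum_nonneg fun u _ => mul_nonneg (hpolpos t u).le (hM0 u)
  have hVR : ∀ t, V t ≤ R := fun t => (hVstar t).trans (hM1 uStar)
  have habsMV : ∀ t u, |M u - V t| ≤ R := by
    intro t u
    rw [abs_le]
    constructor
    · have := hM0 u; have := hVR t; linarith
    · have := hM1 u; have := hV0 t; linarith
  set x : ℕ → U → ℝ := fun t u => η * (pol t u * (M u - V t)) with hxdef
  have hηR : η * R ≤ 1 / 8 := by
    have h2 : η * R ≤ ((1 - γ) ^ 3 / 8) * (1 / (1 - γ)) := by
      apply mul_le_mul hη (le_refl _) hRpos.le (by positivity)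
    have h3 : ((1 - γ) ^ 3 / 8) * (1 / (1 - γ)) = (1 - γ)^2 / 8 := by
      field_simp
    have h4 : (1 - γ)^2 ≤ 1 := by nlinarith
    rw [h3] at h2; linarith
  have hx1 : ∀ t u, |x t u| ≤ 1 := by
    intro t u
    have : |x t u| = η * (pol t u * |M u - V t|) := by
      simp only [hxdef, abs_mul, abs_of_pos hη0, abs_of_pos (hpolpos t u)]
    rw [this]
    have h1 : pol t u * |M u - V t| ≤ 1 * R :=
      mul_le_mul (hpolle t u) (habsMV t u) (abs_nonneg _) zero_le_one
    have : η * (pol t u * |M u - V t|) ≤ η * R := by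
      apply mul_le_mul_of_nonneg_left _ hη0.le; linarith
    linarith
  set Z : ℕ → ℝ := fun t => ∑ u, pol t u * Real.exp (x t u) with hZdef
  have hZpos : ∀ t, 0 < Z t := fun t =>
    Finset.sum_pos (fun u _ => mul_pos (hpolpos t u) (Real.exp_pos _)) Finset.univ_nonempty
  have hZle : ∀ t, Z t ≤ Real.exp 1 := by
    intro t
    calc ∑ u, pol t u * Real.exp (x t u) ≤ ∑ u, pol t u * Real.exp 1 := by
          apply Finset.sum_le_sum
          intro u _
          apply mul_le_mul_of_nonneg_left _ (hpolpos t u).le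
          exact Real.exp_le_exp.mpr ((abs_le.mp (hx1 t u)).2)
      _ = Real.exp 1 := by rw [← Finset.sum_mul, hpolsum, one_mul]
  have hψsucc : ∀ t u, ψ (t+1) u = ψ t u + x t u := hupd
  have hDsucc : ∀ t, D (t+1) = D t * Z t := by
    intro t
    have h1 : D (t+1) = ∑ u, Real.exp (ψ t u) * Real.exp (x t u) := by
      simp only [hDdef]
      exact Finset.sum_congr rfl fun u _ => by rw [hψsucc, Real.exp_add]
    rw [h1, hZdef, Finset.mul_sum]
    exact Finset.sum_congr rfl fun u _ => by
      rw [hpolD]; field_simp; exact (div_self (hDpos t).ne').symm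
  have hpolsucc : ∀ t u, pol (t+1) u = pol t u * Real.exp (x t u) / Z t := by
    intro t u
    rw [hpolD, hψsucc, Real.exp_add, hDsucc, hpolD]
    rw [div_mul_eq_mul_div, div_div]
  set G : ℕ → ℝ := fun t => ∑ u, (pol t u)^2 * (M u - V t)^2 with hGdef
  have hG0 : ∀ t, 0 ≤ G t :=
    fun t => Finset.sum_nonneg fun u _ => by positivity
  have hGsingle : ∀ t, (pol t uStar)^2 * (M uStar - V t)^2 ≤ G t := by
    intro t
    exact Finset.single_le_sum (f := fun u => (pol t u)^2 * (M u - V t)^2)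
      (fun u _ => by positivity) (Finset.mem_univ uStar)
  clear_value R D x Z G
  -- the key value-improvement inequality
  have hVdiff : ∀ t, (η / (Real.exp 1 * Real.exp 1)) * G t ≤ V (t+1) - V t := by
    intro t
    have hsum0 : ∑ u, pol t u * (M u - V t) = 0 := by
      have : ∑ u, pol t u * (M u - V t) = (∑ u, pol t u * M u) - V t * ∑ u, pol t u := by
        rw [Finset.mul_sum, ← Finset.sum_sub_distrib]
        exact Finset.sum_congr rfl fun u _ => by ring
      rw [this, hpolsum, ← hV]; ring
    have hid : V (t+1) - V t =
        (∑ u, pol t u * ((Real.exp (x t u) - 1) * (M u - V t))) / Z t := by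
      have h1 : V (t+1) - V t = ∑ u, pol (t+1) u * (M u - V t) := by
        have : ∑ u, pol (t+1) u * (M u - V t)
            = (∑ u, pol (t+1) u * M u) - V t * ∑ u, pol (t+1) u := by
          rw [Finset.mul_sum, ← Finset.sum_sub_distrib]
          exact Finset.sum_congr rfl fun u _ => by ring
        rw [this, hpolsum, ← hV]; ring
      have h2 : ∑ u, pol (t+1) u * (M u - V t)
          = (∑ u, pol t u * (Real.exp (x t u) * (M u - V t))) / Z t := by
        rw [Finset.sum_div]
        apply Finset.sum_congr rfl
        intro u _
        rw [hpolsucc]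
        field_simp
      have h3 : ∑ u, pol t u * ((Real.exp (x t u) - 1) * (M u - V t))
          = ∑ u, pol t u * (Real.exp (x t u) * (M u - V t)) := by
        have h4 : ∀ u : U, pol t u * ((Real.exp (x t u) - 1) * (M u - V t))
            = pol t u * (Real.exp (x t u) * (M u - V t)) - pol t u * (M u - V t) := by
          intro u; ring
        rw [Finset.sum_congr rfl fun u _ => h4 u, Finset.sum_sub_distrib, hsum0]
        ring
      rw [h1, h2, h3]
    -- pointwise lower bound on the numerator
    have hpt : ∀ u : U, (η / Real.exp 1) * ((pol t u)^2 * (M u - V t)^2)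
        ≤ pol t u * ((Real.exp (x t u) - 1) * (M u - V t)) := by
      intro u
      have ha : 0 ≤ η * pol t u := mul_nonneg hη0.le (hpolpos t u).le
      have hac : (η * pol t u) * (M u - V t) = x t u := by rw [hxdef]; ring
      have h1 := ippAux1 (η * pol t u) (M u - V t) ha (by rw [hac]; exact hx1 t u)
      rw [hac] at h1
      have h2 := mul_le_mul_of_nonneg_left h1 (hpolpos t u).le
      calc (η / Real.exp 1) * ((pol t u)^2 * (M u - V t)^2)
          = pol t u * (η * pol t u * (M u - V t)^2 / Real.exp 1) := by
            field_simp
        _ ≤ pol t u * ((Real.exp (x t u) - 1) * (M u - V t)) := h2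
    have hnum : (η / Real.exp 1) * G t
        ≤ ∑ u, pol t u * ((Real.exp (x t u) - 1) * (M u - V t)) := by
      rw [hGdef, Finset.mul_sum]
      exact Finset.sum_le_sum fun u _ => hpt u
    have hnum0 : 0 ≤ ∑ u, pol t u * ((Real.exp (x t u) - 1) * (M u - V t)) := by
      refine le_trans ?_ hnum
      exact mul_nonneg (by positivity) (hG0 t)
    rw [hid]
    calc (η / (Real.exp 1 * Real.exp 1)) * G t
        = ((η / Real.exp 1) * G t) / Real.exp 1 := by field_simp
      _ ≤ (∑ u, pol t u * ((Real.exp (x t u) - 1) * (M u - V t))) / Real.exp 1 := by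
          gcongr
      _ ≤ (∑ u, pol t u * ((Real.exp (x t u) - 1) * (M u - V t))) / Z t := by
          exact div_le_div_of_nonneg_left hnum0 (hZpos t) (hZle t)
  have hVmono : Monotone V := by
    apply monotone_nat_of_le_succ
    intro t
    have h1 := hVdiff t
    have h2 : 0 ≤ (η / (Real.exp 1 * Real.exp 1)) * G t :=
      mul_nonneg (by positivity) (hG0 t)
    linarith
  -- degenerate case: a single action
  by_cases hU : ∃ u : U, u ≠ uStar
  swap
  · push_neg at hU
    have huniv : (Finset.univ : Finset U) = {uStar} := by
      apply Finset.eq_singleton_iff_unique_mem.mpr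
      exact ⟨Finset.mem_univ _, fun u _ => hU u⟩
    have hone : ∀ t, pol t uStar = 1 := by
      intro t
      have hs := hpolsum t
      rw [huniv, Finset.sum_singleton] at hs
      exact hs
    constructor
    · simpa [hone] using tendsto_const_nhds (α := ℝ) (f := Filter.atTop (α := ℕ))
    · intro u hu; exact absurd (hU u) hu
  obtain ⟨u₁, hu₁⟩ := hU
  -- it suffices to show each suboptimal action's probability tends to 0
  have hfinal : (∀ u : U, u ≠ uStar → Filter.Tendsto (fun t => pol t u) Filter.atTop (nhds 0)) →
      Filter.Tendsto (fun t => pol t uStar) Filter.atTop (nhds 1) ∧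
      ∀ u : U, u ≠ uStar → Filter.Tendsto (fun t => pol t u) Filter.atTop (nhds 0) := by
    intro h
    refine ⟨?_, h⟩
    have hrep : ∀ t, pol t uStar = 1 - ∑ u ∈ Finset.univ.erase uStar, pol t u := by
      intro t
      have := hpolsum t
      rw [← Finset.add_sum_erase _ _ (Finset.mem_univ uStar)] at this
      linarith
    have hsum0 : Filter.Tendsto (fun t => ∑ u ∈ Finset.univ.erase uStar, pol t u)
        Filter.atTop (nhds 0) := by
      have := tendsto_finset_sum (Finset.univ.erase uStar)
        (fun u hu => h u (Finset.ne_of_mem_erase hu))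
      simpa using this
    have := hsum0.const_sub 1
    simp only [sub_zero] at this
    exact Filter.Tendsto.congr (fun t => (hrep t).symm) this
  -- main case split
  by_cases hcase : ∃ t₀, ∀ u : U, u ≠ uStar → M u < V t₀
  · -- Case 1 : the value has overtaken every suboptimal reward
    obtain ⟨t₀, ht₀⟩ := hcase
    apply hfinal
    intro u hu
    have hgapu : 0 < V t₀ - M u := sub_pos.mpr (ht₀ u hu)
    set g : ℕ → ℝ := fun m => ψ (m + t₀) u - ψ (m + t₀) uStar with hgdef
    have hgap : ∀ m, η * (V t₀ - M u) * pol (m + t₀) u ≤ g m - g (m + 1) := by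
      intro m
      have hidx : m + 1 + t₀ = (m + t₀) + 1 := by omega
      have h1 : g (m+1) - g m = x (m + t₀) u - x (m + t₀) uStar := by
        simp only [hgdef, hidx, hψsucc]
        ring
      have h2 : 0 ≤ x (m + t₀) uStar := by
        have := hVstar (m + t₀)
        have := (hpolpos (m + t₀) uStar).le
        simp only [hxdef]
        have : 0 ≤ M uStar - V (m + t₀) := by linarith [hVstar (m + t₀)]
        positivity
      have h3 : x (m + t₀) u ≤ -(η * (V t₀ - M u) * pol (m + t₀) u) := by
        simp only [hxdef]
        have hle : V t₀ ≤ V (m + t₀) := hVmono (by omega)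
        have hp := (hpolpos (m + t₀) u).le
        nlinarith [mul_nonneg (mul_nonneg hη0.le hp) (sub_nonneg.mpr hle)]
      have := h1
      nlinarith
    have hganti : Antitone g := by
      apply antitone_nat_of_succ_le
      intro m
      have := hgap m
      have hp := (hpolpos (m + t₀) u).le
      nlinarith [mul_nonneg (mul_nonneg hη0.le hgapu.le) hp]
    have hpolg : ∀ m, pol (m + t₀) u ≤ Real.exp (g m) := by
      intro m
      have hDge : Real.exp (ψ (m + t₀) uStar) ≤ D (m + t₀) := by
        rw [hDdef]
        exact Finset.single_le_sum (f := fun u' => Real.exp (ψ (m + t₀) u'))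
          (fun u' _ => (Real.exp_pos _).le) (Finset.mem_univ uStar)
      rw [hpolD, hgdef]
      rw [Real.exp_sub]
      exact div_le_div_of_nonneg_left (Real.exp_pos _).le (Real.exp_pos _) hDge
    have hshift : Filter.Tendsto (fun m => pol (m + t₀) u) Filter.atTop (nhds 0) := by
      rcases tendsto_of_antitone hganti with hbot | ⟨l, hl⟩
      · apply squeeze_zero (fun m => (hpolpos (m + t₀) u).le) hpolg
        exact Real.tendsto_exp_atBot.comp hbot
      · have hl1 : Filter.Tendsto (fun m => g (m + 1)) Filter.atTop (nhds l) :=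
          hl.comp (Filter.tendsto_add_atTop_nat 1)
        have hdiff : Filter.Tendsto (fun m => (g m - g (m + 1)) / (η * (V t₀ - M u)))
            Filter.atTop (nhds 0) := by
          have h0 : Filter.Tendsto (fun m => g m - g (m + 1)) Filter.atTop (nhds (l - l)) :=
            hl.sub hl1
          rw [sub_self] at h0
          simpa using h0.div_const (η * (V t₀ - M u))
        apply squeeze_zero (fun m => (hpolpos (m + t₀) u).le) _ hdiff
        intro m
        rw [le_div_iff₀ (by positivity)]
        calc pol (m + t₀) u * (η * (V t₀ - M u)) = η * (V t₀ - M u) * pol (m + t₀) u := by ring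
          _ ≤ g m - g (m + 1) := hgap m
    exact (Filter.tendsto_add_atTop_iff_nat t₀).mp hshift
  · -- Case 2 : V t never overtakes all suboptimal rewards — impossible
    exfalso
    push_neg at hcase
    have hs : (Finset.univ.erase uStar).Nonempty :=
      ⟨u₁, Finset.mem_erase.mpr ⟨hu₁, Finset.mem_univ _⟩⟩
    set M₂ : ℝ := (Finset.univ.erase uStar).sup' hs M with hM₂def
    have hVleM₂ : ∀ t, V t ≤ M₂ := by
      intro t
      obtain ⟨u, hu, hle⟩ := hcase t
      exact le_trans hle
        (Finset.le_sup' M (Finset.mem_erase.mpr ⟨hu, Finset.mem_univ _⟩))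
    have hM₂lt : M₂ < M uStar := by
      apply (Finset.sup'_lt_iff hs).mpr
      intro u hu
      exact hmax u (Finset.mem_erase.mp hu).1
    have hVbdd : BddAbove (Set.range V) := ⟨M₂, by rintro _ ⟨t, rfl⟩; exact hVleM₂ t⟩
    set Vinf : ℝ := ⨆ t, V t with hVinfdef
    have hVleVinf : ∀ t, V t ≤ Vinf := fun t => le_ciSup hVbdd t
    have hVinfleM₂ : Vinf ≤ M₂ := ciSup_le hVleM₂
    have hVinf0 : 0 ≤ Vinf := le_trans (hV0 0) (hVleVinf 0)
    have hVinfR : Vinf ≤ R := ciSup_le hVR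
    have hVtend : Filter.Tendsto V Filter.atTop (nhds Vinf) := tendsto_atTop_ciSup hVmono hVbdd
    set Δ : ℝ := M uStar - Vinf with hΔdef
    have hΔpos : 0 < Δ := by rw [hΔdef]; linarith
    set ε : ℕ → ℝ := fun t => Vinf - V t with hεdef
    have hε0 : ∀ t, 0 ≤ ε t := fun t => sub_nonneg.mpr (hVleVinf t)
    have hεanti : Antitone ε := fun s t hst => by
      simp only [hεdef]; have := hVmono hst; linarith
    have hεtend : Filter.Tendsto ε Filter.atTop (nhds 0) := by
      have h := Filter.Tendsto.sub (tendsto_const_nhds (x := Vinf) (f := Filter.atTop (α := ℕ))) hVtend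
      simpa using h
    clear_value M₂ Vinf Δ ε
    have hεpos : ∀ t, 0 < ε t := by
      intro t
      rcases (hε0 t).lt_or_eq with h | h
      · exact h
      · exfalso
        have hVt : V t = Vinf := by simp only [hεdef] at h; linarith
        have h1 := hVdiff t
        have h2 : V (t+1) ≤ Vinf := hVleVinf (t+1)
        have h3 : (pol t uStar)^2 * (M uStar - V t)^2 ≤ G t := hGsingle t
        have h4 : 0 < (pol t uStar)^2 * (M uStar - V t)^2 := by
          apply mul_pos (pow_pos (hpolpos t uStar) 2)
          apply pow_pos
          rw [hVt]; linarith
        have h5 : 0 < η / (Real.exp 1 * Real.exp 1) := by positivity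
        have hGpos : 0 < G t := lt_of_lt_of_le h4 h3
        have h6 : 0 < η / (Real.exp 1 * Real.exp 1) * G t := mul_pos h5 hGpos
        rw [hVt] at h1
        linarith
    -- High and Low actions
    set High : Finset U := Finset.univ.filter (fun u => Vinf < M u) with hHighdef
    have hstarHigh : uStar ∈ High := by
      rw [hHighdef]; apply Finset.mem_filter.mpr
      exact ⟨Finset.mem_univ _, by linarith⟩
    have hHighne : High.Nonempty := ⟨uStar, hstarHigh⟩
    set δm : ℝ := High.inf' hHighne (fun u => M u - Vinf) with hδmdef
    have hδmpos : 0 < δm := by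
      rw [hδmdef]
      apply (Finset.lt_inf'_iff hHighne).mpr
      intro u hu
      have := (Finset.mem_filter.mp hu).2
      linarith
    have hδmle : ∀ u, Vinf < M u → δm ≤ M u - Vinf := by
      intro u hu
      have hmem : u ∈ High := Finset.mem_filter.mpr ⟨Finset.mem_univ _, hu⟩
      exact Finset.inf'_le (fun v => M v - Vinf) hmem
    clear_value High δm
    set Low : Finset U := Finset.univ.filter (fun u => M u < Vinf) with hLowdef
    -- logits of low actions are bounded above
    have hLowB : ∀ u : U, ∃ C : ℝ, 0 ≤ C ∧ (M u < Vinf → ∀ t, Real.exp (ψ t u) ≤ C) := by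
      intro u
      by_cases hMu : M u < Vinf
      · obtain ⟨tu, htu⟩ : ∃ t, M u < V t := (lt_ciSup_iff hVbdd).mp (hVinfdef ▸ hMu)
        have hne : (Finset.range (tu+1)).Nonempty := ⟨tu, by simp⟩
        set B : ℝ := (Finset.range (tu+1)).sup' hne (fun s => ψ s u) with hBdef
        refine ⟨Real.exp B, (Real.exp_pos _).le, fun _ => ?_⟩
        intro t
        apply Real.exp_le_exp.mpr
        induction t with
        | zero => exact Finset.le_sup' (fun s => ψ s u) (Finset.mem_range.mpr (Nat.succ_pos tu))
        | succ m ih =>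
          rcases lt_or_ge m tu with h | h
          · exact Finset.le_sup' (fun s => ψ s u) (Finset.mem_range.mpr (by omega))
          · have hx0 : x m u ≤ 0 := by
              have hVm : M u ≤ V m := le_trans htu.le (hVmono h)
              have hp := (hpolpos m u).le
              simp only [hxdef]
              have : M u - V m ≤ 0 := by linarith
              exact mul_nonpos_of_nonneg_of_nonpos hη0.le
                (mul_nonpos_of_nonneg_of_nonpos hp this)
            have := hψsucc m u
            linarith
      · exact ⟨0, le_refl _, fun h => absurd h hMu⟩
    choose Cf hCf0 hCfB using hLowB
    set C' : ℝ := ∑ u ∈ Low, Cf u with hC'def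
    have hC'0 : 0 ≤ C' := Finset.sum_nonneg fun u _ => hCf0 u
    have hLowsum : ∀ t, ∑ u ∈ Low, Real.exp (ψ t u) ≤ C' := by
      intro t
      apply Finset.sum_le_sum
      intro u hu
      exact hCfB u (Finset.mem_filter.mp hu).2 t
    clear_value Low C'
    -- mass balance : the low actions carry at least ε t / R of the mass
    have hmass : ∀ t, ε t ≤ R * ∑ u ∈ Low, pol t u := by
      intro t
      have h1 : ∑ u, pol t u * (M u - Vinf) = -(ε t) := by
        have : ∑ u, pol t u * (M u - Vinf)
            = (∑ u, pol t u * M u) - Vinf * ∑ u, pol t u := by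
          rw [Finset.mul_sum, ← Finset.sum_sub_distrib]
          exact Finset.sum_congr rfl fun u _ => by ring
        rw [this, hpolsum, ← hV]; simp only [hεdef]; ring
      have hsplit : ∑ u ∈ Low, pol t u * (M u - Vinf)
            + ∑ u ∈ Finset.univ.filter (fun u => ¬ M u < Vinf), pol t u * (M u - Vinf)
          = -(ε t) := by
        rw [← h1, hLowdef]
        exact Finset.sum_filter_add_sum_filter_not _ _ _
      have h2 : 0 ≤ ∑ u ∈ Finset.univ.filter (fun u => ¬ M u < Vinf), pol t u * (M u - Vinf) := by
        apply Finset.sum_nonneg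
        intro u hu
        have := (Finset.mem_filter.mp hu).2
        apply mul_nonneg (hpolpos t u).le
        rw [not_lt] at this
        linarith
      have h3 : ε t ≤ ∑ u ∈ Low, pol t u * (Vinf - M u) := by
        have : ∑ u ∈ Low, pol t u * (Vinf - M u)
            = -(∑ u ∈ Low, pol t u * (M u - Vinf)) := by
          rw [← Finset.sum_neg_distrib]
          exact Finset.sum_congr rfl fun u _ => by ring
        rw [this]; linarith
      calc ε t ≤ ∑ u ∈ Low, pol t u * (Vinf - M u) := h3
        _ ≤ ∑ u ∈ Low, pol t u * R := by
            apply Finset.sum_le_sum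
            intro u hu
            apply mul_le_mul_of_nonneg_left _ (hpolpos t u).le
            have := hM0 u
            linarith
        _ = R * ∑ u ∈ Low, pol t u := by rw [← Finset.sum_mul]; ring
    have hLowne : Low.Nonempty := by
      by_contra h
      rw [Finset.not_nonempty_iff_eq_empty] at h
      have hm := hmass 0
      rw [h, Finset.sum_empty, mul_zero] at hm
      exact absurd hm (not_le.mpr (hεpos 0))
    have hC'pos : 0 < C' := by
      obtain ⟨u, hu⟩ := hLowne
      have hu' : M u < Vinf := by
        have := hu
        rw [hLowdef] at this
        exact (Finset.mem_filter.mp this).2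
      calc (0:ℝ) < Real.exp (ψ 0 u) := Real.exp_pos _
        _ ≤ Cf u := hCfB u hu' 0
        _ ≤ C' := by
            rw [hC'def]
            exact Finset.single_le_sum (fun v _ => hCf0 v) hu
    -- hence ε t * D t is uniformly bounded
    have hDe : ∀ t, ε t * D t ≤ R * C' := by
      intro t
      have h1 : ∑ u ∈ Low, pol t u = (∑ u ∈ Low, Real.exp (ψ t u)) / D t := by
        rw [Finset.sum_div]
        exact Finset.sum_congr rfl fun u _ => hpolD t u
      have h2 : ε t ≤ R * ((∑ u ∈ Low, Real.exp (ψ t u)) / D t) := by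
        rw [← h1]; exact hmass t
      have h3 : ε t * D t ≤ R * (∑ u ∈ Low, Real.exp (ψ t u)) := by
        rw [← mul_div_assoc] at h2
        exact (le_div_iff₀ (hDpos t)).mp h2
      exact le_trans h3 (mul_le_mul_of_nonneg_left (hLowsum t) hRpos.le)
    have hstarlb : ∀ t, Real.exp (ψ t uStar) * ε t ≤ (R * C') * pol t uStar := by
      intro t
      have h1 : Real.exp (ψ t uStar) = pol t uStar * D t := by
        rw [hpolD, div_mul_cancel₀ _ (hDpos t).ne']
      rw [h1]
      calc pol t uStar * D t * ε t = pol t uStar * (ε t * D t) := by ring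
        _ ≤ pol t uStar * (R * C') := by
            exact mul_le_mul_of_nonneg_left (hDe t) (hpolpos t uStar).le
        _ = (R * C') * pol t uStar := by ring
    -- the optimal logit is monotone
    have hxstar_lb : ∀ t, η * Δ * pol t uStar ≤ x t uStar := by
      intro t
      simp only [hxdef]
      have h1 : Δ ≤ M uStar - V t := by
        have := hVleVinf t
        rw [hΔdef]; linarith
      have hp := (hpolpos t uStar).le
      have h2 := mul_le_mul_of_nonneg_left (mul_le_mul_of_nonneg_left h1 hp) hη0.le
      calc η * Δ * pol t uStar = η * (pol t uStar * Δ) := by ring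
        _ ≤ η * (pol t uStar * (M uStar - V t)) := h2
    have hψstarmono : Monotone (fun t => ψ t uStar) := by
      apply monotone_nat_of_le_succ
      intro t
      have h1 := hxstar_lb t
      have h2 : 0 ≤ η * Δ * pol t uStar := by
        exact mul_nonneg (mul_nonneg hη0.le hΔpos.le) (hpolpos t uStar).le
      have := hψsucc t uStar
      linarith
    -- the one-step lower bound for log (pol t uStar)
    set n : ℝ := (Fintype.card U : ℝ) with hndef
    have hn1 : (1:ℝ) ≤ n := by
      rw [hndef]; exact_mod_cast Fintype.card_pos
    set S : ℕ → ℝ := fun t => (η/δm + η^2) * G t with hSdef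
    have hcoefpos : 0 < η/δm + η^2 := by positivity
    have hS0 : ∀ t, 0 ≤ S t := fun t => mul_nonneg hcoefpos.le (hG0 t)
    set Lg : ℕ → ℝ := fun t => Real.log (pol t uStar) with hLgdef
    clear_value n S Lg
    have hLgle0 : ∀ t, Lg t ≤ 0 := fun t => by
      simp only [hLgdef]; exact Real.log_nonpos (hpolpos t uStar).le (hpolle t uStar)
    have hLgexp : ∀ t, Real.exp (Lg t) = pol t uStar := fun t => by
      simp only [hLgdef]; exact Real.exp_log (hpolpos t uStar)
    have hLgrec : ∀ t, η * Δ * pol t uStar - η * n * ε t - S t ≤ Lg (t+1) - Lg t := by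
      intro t
      have h1 : Lg (t+1) = Lg t + x t uStar - Real.log (Z t) := by
        simp only [hLgdef]
        rw [hpolsucc]
        rw [Real.log_div (mul_pos (hpolpos t uStar) (Real.exp_pos _)).ne' (hZpos t).ne']
        rw [Real.log_mul (hpolpos t uStar).ne' (Real.exp_pos _).ne', Real.log_exp]
      have h2 : Real.log (Z t) ≤ Z t - 1 := Real.log_le_sub_one_of_pos (hZpos t)
      have hZub : Z t ≤ 1 + η * (∑ u, (pol t u)^2 * (M u - V t)) + η^2 * G t := by
        have hb : ∀ u : U, pol t u * Real.exp (x t u) ≤ pol t u * (1 + x t u + (x t u)^2) :=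
          fun u => mul_le_mul_of_nonneg_left
            (ippAux2 _ ((abs_le.mp (hx1 t u)).2)) (hpolpos t u).le
        have hstep : Z t ≤ ∑ u, pol t u * (1 + x t u + (x t u)^2) := by
          simp only [hZdef]
          exact Finset.sum_le_sum (fun u _ => hb u)
        have hexp : ∑ u, pol t u * (1 + x t u + (x t u)^2)
            = (∑ u, pol t u) + (∑ u, pol t u * x t u) + (∑ u, pol t u * (x t u)^2) := by
          rw [← Finset.sum_add_distrib, ← Finset.sum_add_distrib]
          exact Finset.sum_congr rfl fun u _ => by ring
        have hx1' : ∑ u, pol t u * x t u = η * ∑ u, (pol t u)^2 * (M u - V t) := by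
          rw [Finset.mul_sum]
          exact Finset.sum_congr rfl fun u _ => by simp only [hxdef]; ring
        have hx2' : ∑ u, pol t u * (x t u)^2 ≤ η^2 * G t := by
          rw [hGdef, Finset.mul_sum]
          apply Finset.sum_le_sum
          intro u _
          simp only [hxdef]
          have hple := hpolle t u
          calc pol t u * (η * (pol t u * (M u - V t)))^2
              = η^2 * ((pol t u)^2 * (M u - V t)^2) * pol t u := by ring
            _ ≤ η^2 * ((pol t u)^2 * (M u - V t)^2) * 1 := by
                apply mul_le_mul_of_nonneg_left hple (by positivity)
            _ = η^2 * ((pol t u)^2 * (M u - V t)^2) := by ring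
        rw [hexp, hx1', hpolsum] at hstep
        linarith
      have hT1 : ∑ u, (pol t u)^2 * (M u - V t) ≤ n * ε t + G t / δm := by
        have hper : ∀ u : U,
            (pol t u)^2 * (M u - V t) ≤ ε t + (pol t u)^2 * (M u - V t)^2 / δm := by
          intro u
          have hsq : (pol t u)^2 ≤ 1 := by
            have := hpolle t u; have := (hpolpos t u).le; nlinarith
          rcases le_or_gt (M u) Vinf with hMu | hMu
          · rcases le_or_gt (M u - V t) 0 with h3 | h3
            · have h4 : (pol t u)^2 * (M u - V t) ≤ 0 :=
                mul_nonpos_of_nonneg_of_nonpos (sq_nonneg _) h3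
              have h5 : 0 ≤ (pol t u)^2 * (M u - V t)^2 / δm := by positivity
              have := hε0 t
              linarith
            · have h4 : M u - V t ≤ ε t := by
                simp only [hεdef]; linarith
              have h5 : (pol t u)^2 * (M u - V t) ≤ 1 * (M u - V t) :=
                mul_le_mul_of_nonneg_right hsq h3.le
              have h6 : 0 ≤ (pol t u)^2 * (M u - V t)^2 / δm := by positivity
              linarith
          · have h7 : δm ≤ M u - V t := by
              have := hδmle u hMu; have := hVleVinf t; linarith
            have h8 : 0 ≤ (pol t u)^2 * (M u - V t) :=
              mul_nonneg (sq_nonneg _) (le_trans hδmpos.le h7)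
            have h9 : (pol t u)^2 * (M u - V t) ≤ (pol t u)^2 * (M u - V t)^2 / δm := by
              rw [le_div_iff₀ hδmpos]
              nlinarith
            have := hε0 t
            linarith
        calc ∑ u, (pol t u)^2 * (M u - V t)
            ≤ ∑ u : U, (ε t + (pol t u)^2 * (M u - V t)^2 / δm) :=
              Finset.sum_le_sum fun u _ => hper u
          _ = n * ε t + G t / δm := by
              rw [Finset.sum_add_distrib, Finset.sum_const, Finset.card_univ,
                nsmul_eq_mul, hGdef, Finset.sum_div, hndef]
      have hSexp : S t = η/δm * G t + η^2 * G t := by simp only [hSdef]; ring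
      have h5 : η * (n * ε t + G t / δm) = η * n * ε t + η/δm * G t := by ring
      have h6 := mul_le_mul_of_nonneg_left hT1 hη0.le
      have h7 := hxstar_lb t
      linarith
    -- partial sums of S are uniformly bounded
    set PS : ℕ → ℝ := fun m => ∑ s ∈ Finset.range m, S s with hPSdef
    have hPSmono : Monotone PS := by
      apply monotone_nat_of_le_succ
      intro m
      simp only [hPSdef, Finset.sum_range_succ]
      have := hS0 m; linarith
    have hGsum : ∀ m, ∑ s ∈ Finset.range m, G s
        ≤ (Real.exp 1 * Real.exp 1 / η) * (Vinf - V 0) := by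
      intro m
      have htel : ∑ s ∈ Finset.range m, (V (s+1) - V s) = V m - V 0 :=
        Finset.sum_range_sub V m
      have h1 : (η / (Real.exp 1 * Real.exp 1)) * ∑ s ∈ Finset.range m, G s ≤ V m - V 0 := by
        rw [← htel, Finset.mul_sum]
        exact Finset.sum_le_sum fun s _ => hVdiff s
      have h2 : V m - V 0 ≤ Vinf - V 0 := by have := hVleVinf m; linarith
      have h3 : ∑ s ∈ Finset.range m, G s
          = (Real.exp 1 * Real.exp 1 / η) * ((η / (Real.exp 1 * Real.exp 1))
              * ∑ s ∈ Finset.range m, G s) := by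
        have he : Real.exp 1 ≠ 0 := (Real.exp_pos 1).ne'
        field_simp
      rw [h3]
      apply mul_le_mul_of_nonneg_left (by linarith) (by positivity)
    set κ : ℝ := (η/δm + η^2) * ((Real.exp 1 * Real.exp 1 / η) * (Vinf - V 0)) with hκdef
    have hPSle : ∀ m, PS m ≤ κ := by
      intro m
      calc PS m = (η/δm + η^2) * ∑ s ∈ Finset.range m, G s := by
            simp only [hPSdef, hSdef, Finset.mul_sum]
        _ ≤ κ := by
            rw [hκdef]
            exact mul_le_mul_of_nonneg_left (hGsum m) hcoefpos.le
    have hPSbdd : BddAbove (Set.range PS) := ⟨κ, by rintro _ ⟨m, rfl⟩; exact hPSle m⟩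
    have hL2 : 0 < Real.log 2 := Real.log_pos (by norm_num)
    obtain ⟨T₀, hT₀⟩ : ∃ T₀, (⨆ m, PS m) - Real.log 2 < PS T₀ :=
      (lt_ciSup_iff hPSbdd).mp (sub_lt_self _ hL2)
    have htail : ∀ a b : ℕ, T₀ ≤ a → ∑ s ∈ Finset.Ico a b, S s ≤ Real.log 2 := by
      intro a b ha
      rcases le_or_gt b a with h | h
      · rw [Finset.Ico_eq_empty (by omega), Finset.sum_empty]
        exact hL2.le
      · have heq : ∑ s ∈ Finset.Ico a b, S s
            = (∑ s ∈ Finset.range b, S s) - ∑ s ∈ Finset.range a, S s :=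
          Finset.sum_Ico_eq_sub _ h.le
        have h1 : PS b ≤ ⨆ m, PS m := le_ciSup hPSbdd b
        have h2 : PS T₀ ≤ PS a := hPSmono ha
        simp only [hPSdef] at h1 h2 ⊢
        rw [heq]
        linarith
    -- the region argument : for t ≥ T₀ the optimal probability stays below (4n/Δ) ε t
    have hregion : ∀ T, T₀ ≤ T → pol T uStar < (4 * n / Δ) * ε T := by
      intro T hT
      by_contra hcon
      push_neg at hcon
      have hnΔ : (0:ℝ) < 2 * n / Δ := div_pos (by linarith) hΔpos
      have hεq : ∀ m, 0 < (2*n/Δ) * ε m := fun m => mul_pos hnΔ (hεpos m)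
      have hinv : ∀ m,
          Real.log ((2*n/Δ) * ε (T+m))
              + (Real.log 2 - ∑ s ∈ Finset.Ico T (T+m), S s) ≤ Lg (T+m)
          ∧ Lg T + (η*Δ/2) * (∑ s ∈ Finset.Ico T (T+m), pol s uStar)
              - ∑ s ∈ Finset.Ico T (T+m), S s ≤ Lg (T+m) := by
        intro m
        induction m with
        | zero =>
          constructor
          · simp only [Nat.add_zero, Finset.Ico_self, Finset.sum_empty, sub_zero]
            have h1 : (2*n/Δ) * ε T * 2 ≤ pol T uStar := by
              calc (2*n/Δ) * ε T * 2 = (4*n/Δ) * ε T := by ring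
                _ ≤ pol T uStar := hcon
            have h2 : Real.log ((2*n/Δ) * ε T * 2) ≤ Lg T := by
              simp only [hLgdef]
              exact Real.log_le_log (mul_pos (hεq T) two_pos) h1
            rw [Real.log_mul (hεq T).ne' two_ne_zero] at h2
            linarith
          · simp only [Nat.add_zero, Finset.Ico_self, Finset.sum_empty, mul_zero]
            linarith [le_refl (Lg T)]
        | succ m ih =>
          have hidx : T + (m+1) = (T + m) + 1 := by omega
          have hQle : ∑ s ∈ Finset.Ico T (T+m), S s ≤ Real.log 2 := htail T (T+m) hT
          have hpolge : (2*n/Δ) * ε (T+m) ≤ pol (T+m) uStar := by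
            have h2 : Real.log ((2*n/Δ) * ε (T+m)) ≤ Lg (T+m) := by
              have h1 := ih.1; linarith
            have h3 := Real.exp_le_exp.mpr h2
            rw [Real.exp_log (hεq (T+m)), hLgexp] at h3
            exact h3
          have hrec := hLgrec (T+m)
          have hkey : Lg (T+m) + (η*Δ/2) * pol (T+m) uStar - S (T+m) ≤ Lg ((T+m)+1) := by
            have h4 : η * n * ε (T+m) ≤ η * Δ / 2 * pol (T+m) uStar := by
              have h5 := mul_le_mul_of_nonneg_left hpolge
                (by positivity : (0:ℝ) ≤ η * Δ / 2)
              have h6 : η * Δ / 2 * ((2*n/Δ) * ε (T+m)) = η * n * ε (T+m) := by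
                field_simp
              linarith [h6 ▸ h5]
            linarith
          have hSsucc : ∑ s ∈ Finset.Ico T (T+(m+1)), S s
              = (∑ s ∈ Finset.Ico T (T+m), S s) + S (T+m) := by
            rw [hidx]
            exact Finset.sum_Ico_succ_top (by omega) _
          have hWsucc : ∑ s ∈ Finset.Ico T (T+(m+1)), pol s uStar
              = (∑ s ∈ Finset.Ico T (T+m), pol s uStar) + pol (T+m) uStar := by
            rw [hidx]
            exact Finset.sum_Ico_succ_top (by omega) _
          have hLgsucc : Lg (T+(m+1)) = Lg ((T+m)+1) := by rw [hidx]
          constructor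
          · have h7 : Real.log ((2*n/Δ) * ε (T+(m+1))) ≤ Real.log ((2*n/Δ) * ε (T+m)) :=
              Real.log_le_log (hεq _)
                (mul_le_mul_of_nonneg_left (hεanti (by omega)) hnΔ.le)
            have hpolterm : 0 ≤ (η*Δ/2) * pol (T+m) uStar :=
              mul_nonneg (by positivity) (hpolpos (T+m) uStar).le
            have h1 := ih.1
            rw [hLgsucc, hSsucc]
            linarith
          · have h2 := ih.2
            have hW0 : 0 ≤ ∑ s ∈ Finset.Ico T (T+m), pol s uStar :=
              Finset.sum_nonneg fun s _ => (hpolpos s uStar).le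
            rw [hLgsucc, hSsucc, hWsucc]
            have hexpand : (η*Δ/2) * ((∑ s ∈ Finset.Ico T (T+m), pol s uStar)
                + pol (T+m) uStar)
                = (η*Δ/2) * (∑ s ∈ Finset.Ico T (T+m), pol s uStar)
                  + (η*Δ/2) * pol (T+m) uStar := by ring
            rw [hexpand]
            linarith
      -- within the region, pol uStar stays bounded below, so Lg → ∞ : contradiction
      have hlb : ∀ m, Lg T - Real.log 2 ≤ Lg (T+m) := by
        intro m
        have h := (hinv m).2
        have hW0 : 0 ≤ ∑ s ∈ Finset.Ico T (T+m), pol s uStar :=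
          Finset.sum_nonneg fun s _ => (hpolpos s uStar).le
        have hQ := htail T (T+m) hT
        have h1 : 0 ≤ (η*Δ/2) * ∑ s ∈ Finset.Ico T (T+m), pol s uStar :=
          mul_nonneg (by positivity) hW0
        linarith
      have hpol2 : ∀ s, T ≤ s → pol T uStar / 2 ≤ pol s uStar := by
        intro s hs
        obtain ⟨m, rfl⟩ : ∃ m, s = T + m := ⟨s - T, by omega⟩
        have h2 := Real.exp_le_exp.mpr (hlb m)
        rw [Real.exp_sub, hLgexp, hLgexp, Real.exp_log (by norm_num : (0:ℝ) < 2)] at h2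
        exact h2
      have hWlb : ∀ m : ℕ, (m : ℝ) * (pol T uStar / 2)
          ≤ ∑ s ∈ Finset.Ico T (T+m), pol s uStar := by
        intro m
        have hcard : (Finset.Ico T (T+m)).card = m := by
          rw [Nat.card_Ico]; omega
        calc (m:ℝ) * (pol T uStar / 2)
            = (Finset.Ico T (T+m)).card • (pol T uStar / 2) := by
              rw [hcard, nsmul_eq_mul]
          _ ≤ ∑ s ∈ Finset.Ico T (T+m), pol s uStar :=
              Finset.card_nsmul_le_sum _ _ _
                (fun s hs => hpol2 s (Finset.mem_Ico.mp hs).1)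
      have hc1 : 0 < (η*Δ/2) * (pol T uStar / 2) :=
        mul_pos (by positivity) (half_pos (hpolpos T uStar))
      obtain ⟨m, hm⟩ := exists_nat_gt ((Real.log 2 - Lg T) / ((η*Δ/2) * (pol T uStar / 2)))
      rw [div_lt_iff₀ hc1] at hm
      have h := (hinv m).2
      have hQ := htail T (T+m) hT
      have hWm := mul_le_mul_of_nonneg_left (hWlb m) (by positivity : (0:ℝ) ≤ η*Δ/2)
      have h9 := hLgle0 (T+m)
      have h10 : (η*Δ/2) * ((m:ℝ) * (pol T uStar / 2))
          = (m:ℝ) * ((η*Δ/2) * (pol T uStar / 2)) := by ring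
      rw [h10] at hWm
      linarith
    -- endgame : the optimal logit is bounded, hence pol uStar is bounded below,
    -- contradicting hregion together with ε → 0
    have h4nΔ : (0:ℝ) < 4 * n / Δ := div_pos (by linarith) hΔpos
    set B : ℝ := R * C' * (4*n/Δ) with hBdef
    have hBpos : 0 < B := by
      rw [hBdef]
      exact mul_pos (mul_pos hRpos hC'pos) h4nΔ
    have hexpub : ∀ t, T₀ ≤ t → Real.exp (ψ t uStar) ≤ B := by
      intro t ht
      have h1 := hstarlb t
      have h2 := hregion t ht
      have h3 : Real.exp (ψ t uStar) * ε t < (R * C') * ((4*n/Δ) * ε t) :=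
        lt_of_le_of_lt h1 (mul_lt_mul_of_pos_left h2 (mul_pos hRpos hC'pos))
      have h4 : Real.exp (ψ t uStar) * ε t < B * ε t := by
        rw [hBdef]; calc Real.exp (ψ t uStar) * ε t
            < (R * C') * ((4*n/Δ) * ε t) := h3
          _ = R * C' * (4*n/Δ) * ε t := by ring
      exact le_of_lt ((mul_lt_mul_iff_of_pos_right (hεpos t)).mp h4)
    have hψub : ∀ t, ψ t uStar ≤ Real.log B := by
      intro t
      rcases le_or_gt T₀ t with h | h
      · exact (Real.le_log_iff_exp_le hBpos).mpr (hexpub t h)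
      · calc ψ t uStar ≤ ψ T₀ uStar := hψstarmono h.le
          _ ≤ Real.log B := (Real.le_log_iff_exp_le hBpos).mpr (hexpub T₀ le_rfl)
    have hpolsumB : ∀ m, ∑ s ∈ Finset.range m, pol s uStar
        ≤ (Real.log B - ψ 0 uStar) / (η*Δ) := by
      intro m
      have htel : ∑ s ∈ Finset.range m, (ψ (s+1) uStar - ψ s uStar)
          = ψ m uStar - ψ 0 uStar := Finset.sum_range_sub (fun s => ψ s uStar) m
      have h2 : η*Δ* ∑ s ∈ Finset.range m, pol s uStar ≤ ψ m uStar - ψ 0 uStar := by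
        rw [← htel, Finset.mul_sum]
        apply Finset.sum_le_sum
        intro s _
        have ha := hψsucc s uStar
        have hb := hxstar_lb s
        linarith
      have h3 := hψub m
      rw [le_div_iff₀ (mul_pos hη0 hΔpos)]
      calc (∑ s ∈ Finset.range m, pol s uStar) * (η*Δ)
          = η*Δ* ∑ s ∈ Finset.range m, pol s uStar := by ring
        _ ≤ ψ m uStar - ψ 0 uStar := h2
        _ ≤ Real.log B - ψ 0 uStar := by linarith
    have hεle : ∀ t, ε t ≤ (R * C' / Real.exp (ψ 0 uStar)) * pol t uStar := by
      intro t
      have h1 := hstarlb t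
      have h2 : Real.exp (ψ 0 uStar) ≤ Real.exp (ψ t uStar) :=
        Real.exp_le_exp.mpr (hψstarmono (Nat.zero_le t))
      have h3 : Real.exp (ψ 0 uStar) * ε t ≤ R*C'* pol t uStar :=
        le_trans (mul_le_mul_of_nonneg_right h2 (hε0 t)) h1
      have h4 : ε t ≤ (R*C'* pol t uStar)/Real.exp (ψ 0 uStar) := by
        rw [le_div_iff₀ (Real.exp_pos _)]
        calc ε t * Real.exp (ψ 0 uStar) = Real.exp (ψ 0 uStar) * ε t := by ring
          _ ≤ R*C'* pol t uStar := h3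
      calc ε t ≤ (R*C'* pol t uStar)/Real.exp (ψ 0 uStar) := h4
        _ = (R * C' / Real.exp (ψ 0 uStar)) * pol t uStar := by ring
    set c₁ : ℝ := R * C' / Real.exp (ψ 0 uStar) with hc₁def
    have hc₁0 : 0 ≤ c₁ := by
      rw [hc₁def]; positivity
    set Cε : ℝ := c₁ * ((Real.log B - ψ 0 uStar) / (η*Δ)) with hCεdef
    have hεsumB : ∀ m, ∑ s ∈ Finset.range m, ε s ≤ Cε := by
      intro m
      calc ∑ s ∈ Finset.range m, ε s ≤ ∑ s ∈ Finset.range m, c₁ * pol s uStar :=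
            Finset.sum_le_sum fun s _ => hεle s
        _ = c₁ * ∑ s ∈ Finset.range m, pol s uStar := by rw [Finset.mul_sum]
        _ ≤ Cε := by
            rw [hCεdef]
            exact mul_le_mul_of_nonneg_left (hpolsumB m) hc₁0
    have hLglb : ∀ m, Lg 0 - η*n*Cε - κ ≤ Lg m := by
      intro m
      have htel : ∑ s ∈ Finset.range m, (Lg (s+1) - Lg s) = Lg m - Lg 0 :=
        Finset.sum_range_sub Lg m
      have h2 : ∑ s ∈ Finset.range m, (η*Δ* pol s uStar - η*n* ε s - S s)
          ≤ Lg m - Lg 0 := by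
        rw [← htel]
        exact Finset.sum_le_sum fun s _ => hLgrec s
      have h3 : ∑ s ∈ Finset.range m, (η*Δ* pol s uStar - η*n* ε s - S s)
          = η*Δ* (∑ s ∈ Finset.range m, pol s uStar)
            - η*n* (∑ s ∈ Finset.range m, ε s) - PS m := by
        simp only [hPSdef, Finset.mul_sum]
        rw [← Finset.sum_sub_distrib, ← Finset.sum_sub_distrib]
      have h4 : 0 ≤ η*Δ* ∑ s ∈ Finset.range m, pol s uStar :=
        mul_nonneg (mul_nonneg hη0.le hΔpos.le)
          (Finset.sum_nonneg fun s _ => (hpolpos s uStar).le)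
      have h5 := hεsumB m
      have h6 := hPSle m
      have h7 : η*n* (∑ s ∈ Finset.range m, ε s) ≤ η*n*Cε :=
        mul_le_mul_of_nonneg_left h5 (by positivity)
      rw [h3] at h2
      linarith
    have hpollb : ∀ t, Real.exp (Lg 0 - η*n*Cε - κ) ≤ pol t uStar := by
      intro t
      have h := Real.exp_le_exp.mpr (hLglb t)
      rw [hLgexp] at h
      exact h
    have hev : ∀ᶠ t in Filter.atTop,
        (4*n/Δ) * ε t < Real.exp (Lg 0 - η*n*Cε - κ) := by
      have h1 : Filter.Tendsto (fun t => (4*n/Δ) * ε t) Filter.atTop (nhds 0) := by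
        have := hεtend.const_mul (4*n/Δ)
        simpa using this
      exact h1.eventually_lt_const (Real.exp_pos _)
    obtain ⟨t, hlt, hge⟩ := (hev.and (Filter.eventually_ge_atTop T₀)).exists
    have h1 := hregion t hge
    have h2 := hpollb t
    linarith
end

section
/- Let U be a finite nonempty set and let M : U → ℝ have a unique maximizer u*. Let γ ∈ [0, 1), suppose 0 ≤ M(u) ≤ 1/(1 − γ) for all u ∈ U, let 0 < η ≤ (1 − γ)³/8, define π_ψ(u) = exp(ψ(u))/Σ_{u'} exp(ψ(u')), V(ψ) = Σ_u π_ψ(u)·M(u), and the gradient-ascent iterates ψ^{t+1}(u) = ψ^t(u) + η·π_{ψ^t}(u)·(M(u) − V(ψ^t)) from an arbitrary ψ⁰. Then V(ψ^t) → M(u*) = max_{u ∈ U} M(u) as t → ∞. -/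
lemma aux1 {s B : ℝ} (hB : 0 ≤ B) (h : |s| ≤ B) :
    s ^ 2 * Real.exp (-B) ≤ s * (Real.exp s - 1) := by
  obtain ⟨hl, hr⟩ := abs_le.mp h
  rcases le_or_gt 0 s with hs | hs
  · have h1 : s + 1 ≤ Real.exp s := Real.add_one_le_exp s
    have h2 : Real.exp (-B) ≤ 1 := Real.exp_le_one_iff.mpr (neg_nonpos.mpr hB)
    nlinarith [sq_nonneg s]
  · have h1 : (-s) + 1 ≤ Real.exp (-s) := Real.add_one_le_exp (-s)
    have hes : 0 < Real.exp s := Real.exp_pos s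
    have hprod : Real.exp s * Real.exp (-s) = 1 := by
      rw [← Real.exp_add]; simp
    have h2 : Real.exp s - 1 ≤ s * Real.exp s := by nlinarith
    have h3 : Real.exp (-B) ≤ Real.exp s := Real.exp_le_exp.mpr (by linarith)
    nlinarith [sq_nonneg s]

lemma aux2 {z : ℝ} (h : |z| ≤ 1) : Real.exp z ≤ 1 + z + z ^ 2 := by
  have hb := Real.exp_bound h (n := 2) (by norm_num)
  have : |Real.exp z - (1 + z)| ≤ |z| ^ 2 * (3 / (2 * 2)) := by
    simpa [Finset.sum_range_succ] using hb
  have h2 : |z| ^ 2 = z ^ 2 := sq_abs z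
  have := abs_le.mp this
  nlinarith [sq_nonneg z]


set_option maxHeartbeats 1600000 in
/-- Value convergence form of Lemma 1 (Individual Policy Improvement): along
softmax policy gradient ascent with stepsize `0 < η ≤ (1 − γ)³ / 8`, the
expected value `V ψ^t` converges to `M u* = max_u M u`. -/
theorem individual_policy_improvement_value
    {U : Type*} [Fintype U] [Nonempty U]
    (M : U → ℝ) (uStar : U)
    -- unique maximizer of M
    (hmax : ∀ u : U, u ≠ uStar → M u < M uStar)
    (γ : ℝ) (hγ0 : 0 ≤ γ) (hγ1 : γ < 1)
    (hM0 : ∀ u, 0 ≤ M u) (hM1 : ∀ u, M u ≤ 1 / (1 - γ))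
    (η : ℝ) (hη0 : 0 < η) (hη : η ≤ (1 - γ) ^ 3 / 8)
    -- the logits, softmax policies and values along gradient ascent
    (ψ : ℕ → U → ℝ)
    (pol : ℕ → U → ℝ)
    (hpol : ∀ t u, pol t u = Real.exp (ψ t u) / ∑ u', Real.exp (ψ t u'))
    (V : ℕ → ℝ)
    (hV : ∀ t, V t = ∑ u, pol t u * M u)
    -- gradient ascent update
    (hupd : ∀ t u, ψ (t + 1) u = ψ t u + η * (pol t u * (M u - V t))) :
    Filter.Tendsto V Filter.atTop (nhds (M uStar)) ∧
      ∀ u : U, M u ≤ M uStar := by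
  have hMs : ∀ u : U, M u ≤ M uStar := by
    intro u
    by_cases h : u = uStar
    · exact le_of_eq (by rw [h])
    · exact (hmax u h).le
  refine ⟨?_, hMs⟩
  have h1γ : 0 < 1 - γ := by linarith
  obtain ⟨C, hCdef⟩ : ∃ C : ℝ, C = 1 / (1 - γ) := ⟨_, rfl⟩
  have hCpos : 0 < C := by rw [hCdef]; positivity
  have h1C : 1 ≤ C := by
    rw [hCdef, le_div_iff₀ h1γ]; linarith
  have hηC : η * C ≤ 1 / 8 := by
    rw [hCdef, mul_one_div, div_le_div_iff₀ h1γ (by norm_num : (0:ℝ) < 8)]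
    nlinarith [sq_nonneg (1 - γ)]
  have hMuC : ∀ u, M u ≤ C := fun u => (hM1 u).trans_eq hCdef.symm
  -- basic facts about pol and V
  have hZpos : ∀ t, 0 < ∑ u', Real.exp (ψ t u') :=
    fun t => Finset.sum_pos (fun u _ => Real.exp_pos _) Finset.univ_nonempty
  have hpolpos : ∀ t u, 0 < pol t u := by
    intro t u; rw [hpol]; exact div_pos (Real.exp_pos _) (hZpos t)
  have hpolsum : ∀ t, ∑ u, pol t u = 1 := by
    intro t
    simp only [hpol]
    rw [← Finset.sum_div]
    exact div_self (hZpos t).ne'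
  have hpolle : ∀ t u, pol t u ≤ 1 := by
    intro t u
    calc pol t u ≤ ∑ u', pol t u' :=
          Finset.single_le_sum (fun u' _ => (hpolpos t u').le) (Finset.mem_univ u)
      _ = 1 := hpolsum t
  have hV0 : ∀ t, 0 ≤ V t := by
    intro t; rw [hV]
    exact Finset.sum_nonneg fun u _ => mul_nonneg (hpolpos t u).le (hM0 u)
  have hVleM : ∀ t, V t ≤ M uStar := by
    intro t; rw [hV]
    calc ∑ u, pol t u * M u ≤ ∑ u, pol t u * M uStar :=
          Finset.sum_le_sum fun u _ => mul_le_mul_of_nonneg_left (hMs u) (hpolpos t u).le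
      _ = M uStar := by rw [← Finset.sum_mul, hpolsum, one_mul]
  have hVC : ∀ t, V t ≤ C := fun t => (hVleM t).trans (hMuC uStar)
  obtain ⟨d, hddef⟩ : ∃ d : ℕ → U → ℝ, ∀ t u, d t u = pol t u * (M u - V t) :=
    ⟨_, fun _ _ => rfl⟩
  have hdabs : ∀ t u, |d t u| ≤ C := by
    intro t u
    have h1 : |M u - V t| ≤ C :=
      abs_le.mpr ⟨by linarith [hM0 u, hVC t], by linarith [hMuC u, hV0 t]⟩
    calc |d t u| = pol t u * |M u - V t| := by
          rw [hddef, abs_mul, abs_of_pos (hpolpos t u)]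
      _ ≤ 1 * C := mul_le_mul (hpolle t u) h1 (abs_nonneg _) zero_le_one
      _ = C := one_mul C
  have hdsum : ∀ t, ∑ u, d t u = 0 := by
    intro t
    simp only [hddef, mul_sub]
    rw [Finset.sum_sub_distrib, ← hV t, ← Finset.sum_mul, hpolsum, one_mul, sub_self]
  obtain ⟨E, hEdef⟩ : ∃ E : ℕ → U → ℝ, ∀ t u, E t u = Real.exp (η * d t u) :=
    ⟨_, fun _ _ => rfl⟩
  have hEpos : ∀ t u, 0 < E t u := by
    intro t u; rw [hEdef]; exact Real.exp_pos _
  obtain ⟨D, hDdef⟩ : ∃ D : ℕ → ℝ, ∀ t, D t = ∑ u, pol t u * E t u :=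
    ⟨_, fun _ => rfl⟩
  have hDpos : ∀ t, 0 < D t := by
    intro t; rw [hDdef]
    exact Finset.sum_pos (fun u _ => mul_pos (hpolpos t u) (hEpos t u)) Finset.univ_nonempty
  have hexp_psi : ∀ t u, Real.exp (ψ (t + 1) u) = Real.exp (ψ t u) * E t u := by
    intro t u
    rw [hEdef, hddef, hupd, Real.exp_add]
  have hexpZ : ∀ t u, Real.exp (ψ t u) = pol t u * (∑ u', Real.exp (ψ t u')) := by
    intro t u
    rw [hpol, div_mul_cancel₀]
    exact (hZpos t).ne'
  have hZsucc : ∀ t, (∑ u', Real.exp (ψ (t + 1) u')) = (∑ u', Real.exp (ψ t u')) * D t := by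
    intro t
    rw [hDdef, Finset.mul_sum]
    refine Finset.sum_congr rfl fun u _ => ?_
    rw [hexp_psi, hexpZ t u]; ring
  have hpolsucc : ∀ t u, pol (t + 1) u = pol t u * E t u / D t := by
    intro t u
    rw [hpol, hexp_psi, hZsucc, hexpZ t u,
      show pol t u * (∑ u', Real.exp (ψ t u')) * E t u
          = (∑ u', Real.exp (ψ t u')) * (pol t u * E t u) by ring,
      mul_div_mul_left _ _ (hZpos t).ne']
  obtain ⟨g, hgdef⟩ : ∃ g : ℕ → ℝ, ∀ t, g t = ∑ u, (d t u) ^ 2 := ⟨_, fun _ => rfl⟩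
  have hgnn : ∀ t, 0 ≤ g t := by
    intro t; rw [hgdef]; exact Finset.sum_nonneg fun u _ => sq_nonneg _
  obtain ⟨B₀, hB₀def⟩ : ∃ B₀ : ℝ, B₀ = η * C := ⟨_, rfl⟩
  have hB₀nn : 0 ≤ B₀ := by rw [hB₀def]; exact mul_nonneg hη0.le hCpos.le
  have hB₀8 : B₀ ≤ 1 / 8 := by rw [hB₀def]; exact hηC
  have hEd : ∀ t u, |η * d t u| ≤ B₀ := by
    intro t u
    rw [hB₀def, abs_mul, abs_of_pos hη0]
    exact mul_le_mul_of_nonneg_left (hdabs t u) hη0.le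
  obtain ⟨c, hcdef⟩ : ∃ c : ℝ, c = η * Real.exp (-(2 * B₀)) := ⟨_, rfl⟩
  have hcpos : 0 < c := by rw [hcdef]; exact mul_pos hη0 (Real.exp_pos _)
  -- improvement lemma
  have himp : ∀ t, c * g t ≤ V (t + 1) - V t := by
    intro t
    have hterm : ∀ u, d t u + η * Real.exp (-B₀) * (d t u) ^ 2 ≤ d t u * E t u := by
      intro u
      have h1 := aux1 hB₀nn (hEd t u)
      rw [hEdef]
      nlinarith [Real.exp_pos (η * d t u), Real.exp_pos (-B₀)]
    have hNsum : η * Real.exp (-B₀) * g t ≤ ∑ u, d t u * E t u := by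
      have h0 : ∑ u, (d t u + η * Real.exp (-B₀) * (d t u) ^ 2)
          = η * Real.exp (-B₀) * g t := by
        rw [Finset.sum_add_distrib, hdsum t, hgdef, Finset.mul_sum, zero_add]
      rw [← h0]
      exact Finset.sum_le_sum fun u _ => hterm u
    have hNnn : 0 ≤ ∑ u, d t u * E t u :=
      le_trans (mul_nonneg (mul_nonneg hη0.le (Real.exp_pos _).le) (hgnn t)) hNsum
    have hDle : D t ≤ Real.exp B₀ := by
      rw [hDdef]
      calc ∑ u, pol t u * E t u ≤ ∑ u, pol t u * Real.exp B₀ := by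
            refine Finset.sum_le_sum fun u _ => ?_
            refine mul_le_mul_of_nonneg_left ?_ (hpolpos t u).le
            rw [hEdef]
            exact Real.exp_le_exp.mpr ((le_abs_self _).trans (hEd t u))
        _ = Real.exp B₀ := by rw [← Finset.sum_mul, hpolsum, one_mul]
    have hVd : V (t + 1) - V t = (∑ u, d t u * E t u) / D t := by
      have hs1 : V (t + 1) - V t = ∑ u, pol (t + 1) u * (M u - V t) := by
        calc V (t + 1) - V t
            = ∑ u, pol (t + 1) u * M u - (∑ u, pol (t + 1) u) * V t := by
              rw [hV (t + 1), hpolsum, one_mul]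
          _ = ∑ u, (pol (t + 1) u * M u - pol (t + 1) u * V t) := by
              rw [Finset.sum_mul, ← Finset.sum_sub_distrib]
          _ = ∑ u, pol (t + 1) u * (M u - V t) :=
              Finset.sum_congr rfl fun u _ => by ring
      rw [hs1, Finset.sum_div]
      refine Finset.sum_congr rfl fun u _ => ?_
      rw [hpolsucc, hddef]
      ring
    rw [hVd]
    have hdiv : (η * Real.exp (-B₀) * g t) / Real.exp B₀ ≤ (∑ u, d t u * E t u) / D t :=
      div_le_div₀ hNnn hNsum (hDpos t) hDle
    refine le_trans (le_of_eq ?_) hdiv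
    have hee : Real.exp (-(2 * B₀)) * Real.exp B₀ = Real.exp (-B₀) := by
      rw [← Real.exp_add]; ring_nf
    rw [eq_div_iff (Real.exp_pos B₀).ne', hcdef]
    linear_combination (η * g t) * hee
  have hVmono : Monotone V := by
    apply monotone_nat_of_le_succ
    intro t
    have := himp t
    nlinarith [hgnn t, hcpos]
  have hbdd : BddAbove (Set.range V) := ⟨M uStar, by rintro y ⟨t, rfl⟩; exact hVleM t⟩
  obtain ⟨Vs, hVsdef⟩ : ∃ Vs : ℝ, Vs = ⨆ t, V t := ⟨_, rfl⟩
  have hVtend : Filter.Tendsto V Filter.atTop (nhds Vs) := by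
    rw [hVsdef]
    exact tendsto_atTop_ciSup hVmono hbdd
  have hVleVs : ∀ t, V t ≤ Vs := by
    intro t; rw [hVsdef]; exact le_ciSup hbdd t
  have hVsle : Vs ≤ M uStar := by
    rw [hVsdef]; exact ciSup_le hVleM
  have hVs0 : 0 ≤ Vs := le_trans (hV0 0) (hVleVs 0)
  have hVsC : Vs ≤ C := hVsle.trans (hMuC uStar)
  obtain ⟨x, hxteq⟩ : ∃ x : ℕ → ℝ, ∀ t, x t = Vs - V t := ⟨_, fun _ => rfl⟩
  have hxnn : ∀ t, 0 ≤ x t := by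
    intro t; rw [hxteq]; exact sub_nonneg.mpr (hVleVs t)
  -- partial sums of g are bounded
  have hgsum : ∀ T, ∑ t ∈ Finset.range T, g t ≤ C / c := by
    intro T
    have htel : ∑ t ∈ Finset.range T, (V (t + 1) - V t) = V T - V 0 := Finset.sum_range_sub V T
    have h1 : c * ∑ t ∈ Finset.range T, g t ≤ V T - V 0 := by
      rw [Finset.mul_sum, ← htel]
      exact Finset.sum_le_sum fun t _ => himp t
    have h2 : V T - V 0 ≤ C := by linarith [hVC T, hV0 0]
    rw [le_div_iff₀ hcpos]
    linarith
  by_cases hVsM : Vs = M uStar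
  · rwa [hVsM] at hVtend
  exfalso
  have hlt : Vs < M uStar := lt_of_le_of_ne hVsle hVsM
  obtain ⟨δ, hδdef⟩ : ∃ δ : ℝ, δ = M uStar - Vs := ⟨_, rfl⟩
  have hδpos : 0 < δ := by rw [hδdef]; linarith
  obtain ⟨p, hpdef⟩ : ∃ p : ℕ → ℝ, ∀ t, p t = pol t uStar := ⟨_, fun _ => rfl⟩
  have hppos : ∀ t, 0 < p t := by intro t; rw [hpdef]; exact hpolpos t uStar
  have hple : ∀ t, p t ≤ 1 := by intro t; rw [hpdef]; exact hpolle t uStar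
  have hdstar : ∀ t, δ * p t ≤ d t uStar := by
    intro t
    have h1 : M uStar - V t ≥ δ := by rw [hδdef]; linarith [hVleVs t]
    have h2 : 0 < p t := hppos t
    calc δ * p t ≤ (M uStar - V t) * p t := by nlinarith
      _ = d t uStar := by rw [hddef, hpdef]; ring
  -- minimal gap among better-than-Vs actions
  have hSne : uStar ∈ Finset.univ.filter (fun u => Vs < M u) :=
    Finset.mem_filter.mpr ⟨Finset.mem_univ _, hlt⟩
  obtain ⟨g₀, hg₀def⟩ : ∃ g₀ : ℝ,
      g₀ = (Finset.univ.filter (fun u => Vs < M u)).inf' ⟨uStar, hSne⟩ (fun u => M u - Vs) :=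
    ⟨_, rfl⟩
  have hg₀pos : 0 < g₀ := by
    rw [hg₀def]; refine (Finset.lt_inf'_iff _).mpr ?_
    intro u hu
    have := (Finset.mem_filter.mp hu).2
    linarith
  have hg₀C : g₀ ≤ C := by
    have h1 : g₀ ≤ M uStar - Vs := by
      rw [hg₀def]
      exact Finset.inf'_le (fun u => M u - Vs) hSne
    linarith [hMuC uStar]
  -- pointwise bound used for log D
  have hA : ∀ t u, pol t u ^ 2 * (M u - V t) ≤ x t + C / g₀ ^ 2 * d t u ^ 2 := by
    intro t u
    have hd2 : d t u ^ 2 = pol t u ^ 2 * (M u - V t) ^ 2 := by rw [hddef]; ring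
    by_cases hu : Vs < M u
    · have ha : g₀ ≤ M u - Vs := by
        rw [hg₀def]
        exact Finset.inf'_le (fun u => M u - Vs)
          (Finset.mem_filter.mpr ⟨Finset.mem_univ u, hu⟩)
      have hMV : g₀ ≤ M u - V t := by linarith [hVleVs t]
      have hnn : (0:ℝ) ≤ pol t u ^ 2 * (M u - V t) :=
        mul_nonneg (sq_nonneg _) (by linarith)
      have hge1 : 1 ≤ C / g₀ ^ 2 * (M u - V t) := by
        have h3 : C / g₀ ^ 2 * g₀ ≤ C / g₀ ^ 2 * (M u - V t) :=
          mul_le_mul_of_nonneg_left hMV (by positivity)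
        have h4 : C / g₀ ^ 2 * g₀ = C / g₀ := by
          field_simp
        have h5 : 1 ≤ C / g₀ := (one_le_div hg₀pos).mpr hg₀C
        linarith
      calc pol t u ^ 2 * (M u - V t) = pol t u ^ 2 * (M u - V t) * 1 := (mul_one _).symm
        _ ≤ pol t u ^ 2 * (M u - V t) * (C / g₀ ^ 2 * (M u - V t)) :=
            mul_le_mul_of_nonneg_left hge1 hnn
        _ = C / g₀ ^ 2 * d t u ^ 2 := by rw [hd2]; ring
        _ ≤ x t + C / g₀ ^ 2 * d t u ^ 2 := le_add_of_nonneg_left (hxnn t)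
    · push_neg at hu
      have hcg : (0:ℝ) ≤ C / g₀ ^ 2 * d t u ^ 2 := by positivity
      rcases le_or_gt (V t) (M u) with hVu | hVu
      · have hp2 : pol t u ^ 2 ≤ 1 := by nlinarith [hpolle t u, hpolpos t u]
        have h1 : pol t u ^ 2 * (M u - V t) ≤ 1 * (M u - V t) :=
          mul_le_mul_of_nonneg_right hp2 (by linarith)
        have hxt : M u - V t ≤ x t := by rw [hxteq]; linarith
        linarith
      · have h1 : pol t u ^ 2 * (M u - V t) ≤ 0 :=
          mul_nonpos_of_nonneg_of_nonpos (sq_nonneg _) (by linarith)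
        exact h1.trans (add_nonneg (hxnn t) hcg)
  obtain ⟨n, hndef⟩ : ∃ n : ℝ, n = (Fintype.card U : ℝ) := ⟨_, rfl⟩
  have hn1 : 1 ≤ n := by
    rw [hndef]
    exact_mod_cast Fintype.card_pos
  obtain ⟨e0, he0def⟩ : ∃ e0 : ℝ, e0 = η * C / g₀ ^ 2 + η ^ 2 := ⟨_, rfl⟩
  have he0nn : 0 ≤ e0 := by
    rw [he0def]
    exact add_nonneg (div_nonneg (mul_nonneg hη0.le hCpos.le) (sq_nonneg _)) (sq_nonneg η)
  -- one-step lower bound on log p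
  have hstep : ∀ t, Real.log (p t) + (η * δ * p t - η * n * x t - e0 * g t)
      ≤ Real.log (p (t + 1)) := by
    intro t
    have hlp : Real.log (p (t + 1)) = Real.log (p t) + η * d t uStar - Real.log (D t) := by
      rw [hpdef, hpdef, hpolsucc]
      rw [Real.log_div (mul_pos (hpolpos t uStar) (hEpos t uStar)).ne' (hDpos t).ne',
        Real.log_mul (hpolpos t uStar).ne' (hEpos t uStar).ne']
      have hle : Real.log (E t uStar) = η * d t uStar := by
        rw [hEdef]; exact Real.log_exp _
      rw [hle]
    have hlogD : Real.log (D t) ≤ η * n * x t + e0 * g t := by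
      have h1 : Real.log (D t) ≤ D t - 1 := Real.log_le_sub_one_of_pos (hDpos t)
      have h2 : D t ≤ 1 + η * (∑ u, pol t u ^ 2 * (M u - V t)) + η ^ 2 * g t := by
        have hptw : ∀ u, pol t u * E t u
            ≤ pol t u + η * (pol t u ^ 2 * (M u - V t)) + η ^ 2 * (d t u) ^ 2 := by
          intro u
          have hz : |η * d t u| ≤ 1 := (hEd t u).trans (by linarith)
          have he := aux2 hz
          have hpd : pol t u * d t u = pol t u ^ 2 * (M u - V t) := by rw [hddef]; ring
          have h3 : pol t u * E t u ≤ pol t u * (1 + η * d t u + (η * d t u) ^ 2) := by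
            rw [hEdef]; exact mul_le_mul_of_nonneg_left he (hpolpos t u).le
          have h4 : pol t u * (η * d t u) ^ 2 ≤ η ^ 2 * d t u ^ 2 := by
            have h41 := mul_le_mul_of_nonneg_right (hpolle t u) (sq_nonneg (η * d t u))
            have h42 : (η * d t u) ^ 2 = η ^ 2 * d t u ^ 2 := by ring
            rw [one_mul] at h41
            linarith
          have h30 : pol t u * (1 + η * d t u + (η * d t u) ^ 2)
              = pol t u + η * (pol t u * d t u) + pol t u * (η * d t u) ^ 2 := by ring
          rw [h30, hpd] at h3
          linarith
        calc D t = ∑ u, pol t u * E t u := hDdef t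
          _ ≤ ∑ u, (pol t u + η * (pol t u ^ 2 * (M u - V t)) + η ^ 2 * (d t u) ^ 2) :=
              Finset.sum_le_sum fun u _ => hptw u
          _ = 1 + η * (∑ u, pol t u ^ 2 * (M u - V t)) + η ^ 2 * g t := by
              rw [Finset.sum_add_distrib, Finset.sum_add_distrib, hpolsum,
                ← Finset.mul_sum, hgdef, ← Finset.mul_sum]
      have h3 : (∑ u, pol t u ^ 2 * (M u - V t)) ≤ n * x t + C / g₀ ^ 2 * g t := by
        calc (∑ u, pol t u ^ 2 * (M u - V t)) ≤ ∑ u, (x t + C / g₀ ^ 2 * d t u ^ 2) :=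
              Finset.sum_le_sum fun u _ => hA t u
          _ = n * x t + C / g₀ ^ 2 * g t := by
              rw [Finset.sum_add_distrib, Finset.sum_const, ← Finset.mul_sum, hgdef,
                nsmul_eq_mul, Finset.card_univ, ← hndef]
      have h4 : η * (∑ u, pol t u ^ 2 * (M u - V t)) ≤ η * (n * x t + C / g₀ ^ 2 * g t) :=
        mul_le_mul_of_nonneg_left h3 hη0.le
      have h5 : η * (n * x t + C / g₀ ^ 2 * g t) + η ^ 2 * g t = η * n * x t + e0 * g t := by
        rw [he0def]; ring
      calc Real.log (D t) ≤ D t - 1 := h1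
        _ ≤ η * (∑ u, pol t u ^ 2 * (M u - V t)) + η ^ 2 * g t := by linarith
        _ ≤ η * (n * x t + C / g₀ ^ 2 * g t) + η ^ 2 * g t := by linarith
        _ = η * n * x t + e0 * g t := h5
    rw [hlp]
    have h6 : η * (δ * p t) ≤ η * d t uStar := mul_le_mul_of_nonneg_left (hdstar t) hη0.le
    have h7 : η * (δ * p t) = η * δ * p t := by ring
    linarith
  obtain ⟨E₀, hE₀def⟩ : ∃ E₀ : ℝ, E₀ = e0 * (C / c) := ⟨_, rfl⟩
  -- telescoped inequality
  have htel : ∀ T' T, T' ≤ T →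
      Real.log (p T') + (∑ t ∈ Finset.Ico T' T, (η * δ * p t - η * n * x t)) - E₀
        ≤ Real.log (p T) := by
    intro T' T hTT
    have key : Real.log (p T')
        + ∑ t ∈ Finset.Ico T' T, (η * δ * p t - η * n * x t - e0 * g t)
        ≤ Real.log (p T) := by
      induction T, hTT using Nat.le_induction with
      | base => simp
      | succ T hT ih =>
          rw [Finset.sum_Ico_succ_top hT]
          have := hstep T
          linarith
    have hEb : ∑ t ∈ Finset.Ico T' T, e0 * g t ≤ E₀ := by
      rw [hE₀def]
      calc ∑ t ∈ Finset.Ico T' T, e0 * g t ≤ ∑ t ∈ Finset.range T, e0 * g t := by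
            refine Finset.sum_le_sum_of_subset_of_nonneg ?_ fun t _ _ => mul_nonneg he0nn (hgnn t)
            rw [Finset.range_eq_Ico]
            exact Finset.Ico_subset_Ico (Nat.zero_le _) le_rfl
        _ = e0 * ∑ t ∈ Finset.range T, g t := by rw [Finset.mul_sum]
        _ ≤ e0 * (C / c) := mul_le_mul_of_nonneg_left (hgsum T) he0nn
    rw [Finset.sum_sub_distrib] at key
    linarith
  -- eventually V t exceeds every strictly-worse-than-Vs value
  have hT0 : ∃ T₀, ∀ t, T₀ ≤ t → ∀ u, M u < Vs → M u ≤ V t := by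
    have hex : ∀ u : U, ∃ t₀, ∀ t, t₀ ≤ t → (M u < Vs → M u ≤ V t) := by
      intro u
      by_cases hu : M u < Vs
      · have hnall : ¬ (∀ t, V t ≤ M u) := by
          intro hall
          have : Vs ≤ M u := by rw [hVsdef]; exact ciSup_le hall
          linarith
        push_neg at hnall
        obtain ⟨t₀, ht₀⟩ := hnall
        exact ⟨t₀, fun t ht _ => le_trans ht₀.le (hVmono ht)⟩
      · exact ⟨0, fun t _ h => absurd h hu⟩
    choose f hf using hex
    exact ⟨Finset.univ.sup f, fun t ht u hu =>
      hf u t (le_trans (Finset.le_sup (Finset.mem_univ u)) ht) hu⟩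
  obtain ⟨T₀, hT₀⟩ := hT0
  have hxle : ∀ t, x t ≤ C * ∑ u ∈ Finset.univ.filter (fun u => M u < Vs), pol t u := by
    intro t
    have h1 : x t = ∑ u, pol t u * (Vs - M u) := by
      calc x t = (∑ u, pol t u) * Vs - ∑ u, pol t u * M u := by
            rw [hpolsum, one_mul, ← hV, hxteq]
        _ = ∑ u, (pol t u * Vs - pol t u * M u) := by
            rw [Finset.sum_mul, ← Finset.sum_sub_distrib]
        _ = ∑ u, pol t u * (Vs - M u) := Finset.sum_congr rfl fun u _ => by ring
    have h2 : ∀ u, pol t u * (Vs - M u) ≤ if M u < Vs then pol t u * C else 0 := by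
      intro u
      by_cases hu : M u < Vs
      · rw [if_pos hu]
        exact mul_le_mul_of_nonneg_left (by linarith [hM0 u]) (hpolpos t u).le
      · rw [if_neg hu]
        push_neg at hu
        exact mul_nonpos_of_nonneg_of_nonpos (hpolpos t u).le (by linarith)
    calc x t = ∑ u, pol t u * (Vs - M u) := h1
      _ ≤ ∑ u, (if M u < Vs then pol t u * C else 0) := Finset.sum_le_sum fun u _ => h2 u
      _ = ∑ u ∈ Finset.univ.filter (fun u => M u < Vs), pol t u * C := by
          rw [Finset.sum_filter]
      _ = C * ∑ u ∈ Finset.univ.filter (fun u => M u < Vs), pol t u := by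
          rw [← Finset.sum_mul, mul_comm]
  obtain ⟨S, hSteq⟩ : ∃ S : ℕ → ℝ, ∀ T, S T = ∑ t ∈ Finset.range T, p t := ⟨_, fun _ => rfl⟩
  have hSmono : Monotone S := by
    apply monotone_nat_of_le_succ
    intro T
    rw [hSteq, hSteq, Finset.sum_range_succ]
    linarith [hppos T]
  have hSsub : ∀ T' T, T' ≤ T → ∑ t ∈ Finset.Ico T' T, p t = S T - S T' := by
    intro T' T h
    rw [hSteq, hSteq]
    exact Finset.sum_Ico_eq_sub _ h
  -- ratio decay for bad actions
  have hrstep : ∀ u, M u < Vs → ∀ t, T₀ ≤ t →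
      pol (t + 1) u / p (t + 1) ≤ pol t u / p t * Real.exp (-(η * δ * p t)) := by
    intro u hu t ht
    have hdu : d t u ≤ 0 := by
      rw [hddef]
      exact mul_nonpos_of_nonneg_of_nonpos (hpolpos t u).le (by linarith [hT₀ t ht u hu])
    have hratio : pol (t + 1) u / p (t + 1)
        = pol t u / p t * Real.exp (η * d t u - η * d t uStar) := by
      rw [hpdef, hpdef, hpolsucc t u, hpolsucc t uStar, Real.exp_sub,
        ← hEdef, ← hEdef]
      have hne1 : pol t uStar ≠ 0 := (hpolpos t uStar).ne'
      have hne2 : E t uStar ≠ 0 := (hEpos t uStar).ne'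
      have hne3 : D t ≠ 0 := (hDpos t).ne'
      field_simp
      all_goals ring
    rw [hratio]
    refine mul_le_mul_of_nonneg_left ?_ (div_nonneg (hpolpos t u).le (hppos t).le)
    apply Real.exp_le_exp.mpr
    have h6 : η * (δ * p t) ≤ η * d t uStar := mul_le_mul_of_nonneg_left (hdstar t) hη0.le
    have h7 : η * d t u ≤ 0 := mul_nonpos_of_nonneg_of_nonpos hη0.le hdu
    have h8 : η * (δ * p t) = η * δ * p t := by ring
    linarith
  have hrind : ∀ u, M u < Vs → ∀ t, T₀ ≤ t →
      pol t u / p t ≤ pol T₀ u / p T₀ * Real.exp (-(η * δ * (S t - S T₀))) := by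
    intro u hu t ht
    induction t, ht using Nat.le_induction with
    | base => simp
    | succ t ht ih =>
        have h1 := hrstep u hu t ht
        have hS1 : S (t + 1) = S t + p t := by
          rw [hSteq, hSteq, Finset.sum_range_succ]
        calc pol (t + 1) u / p (t + 1) ≤ pol t u / p t * Real.exp (-(η * δ * p t)) := h1
          _ ≤ (pol T₀ u / p T₀ * Real.exp (-(η * δ * (S t - S T₀))))
              * Real.exp (-(η * δ * p t)) :=
              mul_le_mul_of_nonneg_right ih (Real.exp_pos _).le
          _ = pol T₀ u / p T₀ * Real.exp (-(η * δ * (S (t + 1) - S T₀))) := by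
              rw [mul_assoc, ← Real.exp_add, hS1,
                show -(η * δ * (S t - S T₀)) + -(η * δ * p t)
                    = -(η * δ * (S t + p t - S T₀)) by ring]
  obtain ⟨R, hRdef⟩ : ∃ R : ℝ,
      R = ∑ u ∈ Finset.univ.filter (fun u => M u < Vs), pol T₀ u / p T₀ := ⟨_, rfl⟩
  have hRnn : 0 ≤ R := by
    rw [hRdef]
    exact Finset.sum_nonneg fun u _ => div_nonneg (hpolpos T₀ u).le (hppos T₀).le
  have hxp : ∀ t, T₀ ≤ t → x t ≤ C * R * Real.exp (-(η * δ * (S t - S T₀))) * p t := by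
    intro t ht
    calc x t ≤ C * ∑ u ∈ Finset.univ.filter (fun u => M u < Vs), pol t u := hxle t
      _ = C * ∑ u ∈ Finset.univ.filter (fun u => M u < Vs), pol t u / p t * p t := by
          congr 1
          exact Finset.sum_congr rfl fun u _ => (div_mul_cancel₀ _ (hppos t).ne').symm
      _ ≤ C * ∑ u ∈ Finset.univ.filter (fun u => M u < Vs),
            (pol T₀ u / p T₀ * Real.exp (-(η * δ * (S t - S T₀)))) * p t := by
          refine mul_le_mul_of_nonneg_left (Finset.sum_le_sum fun u hu => ?_) hCpos.le
          refine mul_le_mul_of_nonneg_right ?_ (hppos t).le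
          exact hrind u (Finset.mem_filter.mp hu).2 t ht
      _ = C * R * Real.exp (-(η * δ * (S t - S T₀))) * p t := by
          rw [hRdef, Finset.mul_sum, Finset.mul_sum, Finset.sum_mul, Finset.sum_mul]
          exact Finset.sum_congr rfl fun u _ => by ring
  by_cases hSbd : BddAbove (Set.range S)
  · -- Case A : total uStar mass finite, yet p is bounded below
    obtain ⟨SB, hSB⟩ := hSbd
    have hSB' : ∀ T, S T ≤ SB := fun T => hSB ⟨T, rfl⟩
    have hS0 : 0 ≤ S T₀ := by
      rw [hSteq]
      exact Finset.sum_nonneg fun t _ => (hppos t).le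
    obtain ⟨LB, hLBdef⟩ : ∃ LB : ℝ,
        LB = Real.log (p T₀) - η * n * (C * R) * SB - E₀ := ⟨_, rfl⟩
    have hlb : ∀ T, T₀ ≤ T → LB ≤ Real.log (p T) := by
      intro T hT
      have h1 := htel T₀ T hT
      have h2 : ∀ t ∈ Finset.Ico T₀ T, -(η * n * (C * R) * p t)
          ≤ η * δ * p t - η * n * x t := by
        intro t htmem
        have htge : T₀ ≤ t := (Finset.mem_Ico.mp htmem).1
        have hexple : Real.exp (-(η * δ * (S t - S T₀))) ≤ 1 := by
          apply Real.exp_le_one_iff.mpr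
          have h7 : 0 ≤ S t - S T₀ := sub_nonneg.mpr (hSmono htge)
          exact neg_nonpos.mpr (mul_nonneg (mul_nonneg hη0.le hδpos.le) h7)
        have h8 : C * R * Real.exp (-(η * δ * (S t - S T₀))) ≤ C * R := by
          have h81 := mul_le_mul_of_nonneg_left hexple (mul_nonneg hCpos.le hRnn)
          rw [mul_one] at h81
          linarith
        have hx1 : x t ≤ C * R * p t :=
          le_trans (hxp t htge) (mul_le_mul_of_nonneg_right h8 (hppos t).le)
        have h9 : η * n * x t ≤ η * n * (C * R * p t) :=
          mul_le_mul_of_nonneg_left hx1 (mul_nonneg hη0.le (by linarith))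
        have h10 : η * n * (C * R * p t) = η * n * (C * R) * p t := by ring
        have h11 : 0 < η * δ * p t := mul_pos (mul_pos hη0 hδpos) (hppos t)
        linarith
      have h3 : ∑ t ∈ Finset.Ico T₀ T, -(η * n * (C * R) * p t)
          ≤ ∑ t ∈ Finset.Ico T₀ T, (η * δ * p t - η * n * x t) :=
        Finset.sum_le_sum h2
      have h4 : ∑ t ∈ Finset.Ico T₀ T, -(η * n * (C * R) * p t)
          = -(η * n * (C * R)) * (S T - S T₀) := by
        rw [← hSsub T₀ T hT, Finset.mul_sum]
        exact Finset.sum_congr rfl fun t _ => by ring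
      have hc0 : 0 ≤ η * n * (C * R) :=
        mul_nonneg (mul_nonneg hη0.le (by linarith)) (mul_nonneg hCpos.le hRnn)
      have h5 : -(η * n * (C * R) * SB) ≤ -(η * n * (C * R)) * (S T - S T₀) := by
        have h6 : S T - S T₀ ≤ SB := by linarith [hSB' T]
        have h7 := mul_le_mul_of_nonneg_left h6 hc0
        linarith
      rw [hLBdef]
      linarith
    have hplb : ∀ T, T₀ ≤ T → Real.exp LB ≤ p T := by
      intro T hT
      calc Real.exp LB ≤ Real.exp (Real.log (p T)) := Real.exp_le_exp.mpr (hlb T hT)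
        _ = p T := Real.exp_log (hppos T)
    obtain ⟨k, hk⟩ := exists_nat_gt (SB / Real.exp LB)
    have hcard : (Finset.Ico T₀ (T₀ + k)).card = k := by rw [Nat.card_Ico]; omega
    have hsumk : (k : ℝ) * Real.exp LB ≤ ∑ t ∈ Finset.Ico T₀ (T₀ + k), p t := by
      calc (k : ℝ) * Real.exp LB = ∑ _t ∈ Finset.Ico T₀ (T₀ + k), Real.exp LB := by
            rw [Finset.sum_const, hcard, nsmul_eq_mul]
        _ ≤ ∑ t ∈ Finset.Ico T₀ (T₀ + k), p t :=
            Finset.sum_le_sum fun t htm => hplb t (Finset.mem_Ico.mp htm).1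
    have hS2 : ∑ t ∈ Finset.Ico T₀ (T₀ + k), p t = S (T₀ + k) - S T₀ :=
      hSsub _ _ (by omega)
    have hek : 0 < Real.exp LB := Real.exp_pos _
    rw [div_lt_iff₀ hek] at hk
    have := hSB' (T₀ + k)
    linarith
  · -- Case B : total uStar mass infinite, log p grows without bound
    have hunb : ∀ b : ℝ, ∃ T, b < S T := by
      intro b
      obtain ⟨y, ⟨T, rfl⟩, hy⟩ := not_bddAbove_iff.mp hSbd b
      exact ⟨T, hy⟩
    obtain ⟨K, hKdef⟩ : ∃ K : ℝ, K = C * R + 1 := ⟨_, rfl⟩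
    have hKpos : 0 < K := by
      rw [hKdef]
      have := mul_nonneg hCpos.le hRnn
      linarith
    have hηδ : 0 < η * δ := mul_pos hη0 hδpos
    have hn0 : (0:ℝ) < n := by linarith
    obtain ⟨ζ, hζdef⟩ : ∃ ζ : ℝ, ζ = Real.log (K * (2 * n) / δ) / (η * δ) := ⟨_, rfl⟩
    have hζprop : ∀ z, ζ ≤ z → K * Real.exp (-(η * δ * z)) ≤ δ / (2 * n) := by
      intro z hz
      have hpos : 0 < K * (2 * n) / δ :=
        div_pos (mul_pos hKpos (by linarith)) hδpos
      have h1 : Real.exp (-(η * δ * z)) ≤ Real.exp (-(η * δ * ζ)) := by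
        apply Real.exp_le_exp.mpr
        have := mul_le_mul_of_nonneg_left hz hηδ.le
        linarith
      have hxz : η * δ * ζ = Real.log (K * (2 * n) / δ) := by
        rw [hζdef]
        field_simp
      have h2 : Real.exp (-(η * δ * ζ)) = δ / (K * (2 * n)) := by
        rw [hxz, Real.exp_neg, Real.exp_log hpos, inv_div]
      have h3 : K * (δ / (K * (2 * n))) = δ / (2 * n) := by
        have h2n : (2 * n) ≠ 0 := by positivity
        field_simp
      calc K * Real.exp (-(η * δ * z))
          ≤ K * (δ / (K * (2 * n))) := by
            refine mul_le_mul_of_nonneg_left ?_ hKpos.le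
            rw [← h2]
            exact h1
        _ = δ / (2 * n) := h3
    obtain ⟨T₁', hT₁'⟩ := hunb (S T₀ + ζ)
    obtain ⟨T₁, hT₁def⟩ : ∃ T₁ : ℕ, T₁ = max T₁' T₀ := ⟨_, rfl⟩
    have hT₁0 : T₀ ≤ T₁ := by rw [hT₁def]; exact le_max_right _ _
    have hST₁ : S T₀ + ζ < S T₁ := by
      refine lt_of_lt_of_le hT₁' (hSmono ?_)
      rw [hT₁def]
      exact le_max_left _ _
    have hx2 : ∀ t, T₁ ≤ t → η * n * x t ≤ η * δ / 2 * p t := by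
      intro t ht
      have htT₀ : T₀ ≤ t := le_trans hT₁0 ht
      have h1 := hxp t htT₀
      have hzζ : ζ ≤ S t - S T₀ := by
        have := hSmono ht
        linarith
      have h2 : C * R * Real.exp (-(η * δ * (S t - S T₀))) ≤ δ / (2 * n) := by
        have h3 := hζprop _ hzζ
        have h4 : C * R * Real.exp (-(η * δ * (S t - S T₀)))
            ≤ K * Real.exp (-(η * δ * (S t - S T₀))) := by
          refine mul_le_mul_of_nonneg_right ?_ (Real.exp_pos _).le
          rw [hKdef]; linarith
        linarith
      have hxt : x t ≤ δ / (2 * n) * p t :=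
        le_trans h1 (mul_le_mul_of_nonneg_right h2 (hppos t).le)
      have h5 : η * n * (δ / (2 * n) * p t) = η * δ / 2 * p t := by
        field_simp
      have h6 : η * n * x t ≤ η * n * (δ / (2 * n) * p t) :=
        mul_le_mul_of_nonneg_left hxt (mul_nonneg hη0.le hn0.le)
      linarith
    obtain ⟨T₂', hT₂'⟩ := hunb (S T₁ + 2 / (η * δ) * (E₀ - Real.log (p T₁) + 1))
    obtain ⟨T₂, hT₂def⟩ : ∃ T₂ : ℕ, T₂ = max T₂' T₁ := ⟨_, rfl⟩
    have hT₂1 : T₁ ≤ T₂ := by rw [hT₂def]; exact le_max_right _ _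
    have hST₂ : S T₁ + 2 / (η * δ) * (E₀ - Real.log (p T₁) + 1) < S T₂ := by
      refine lt_of_lt_of_le hT₂' (hSmono ?_)
      rw [hT₂def]
      exact le_max_left _ _
    have h1 := htel T₁ T₂ hT₂1
    have h2 : η * δ / 2 * (S T₂ - S T₁)
        ≤ ∑ t ∈ Finset.Ico T₁ T₂, (η * δ * p t - η * n * x t) := by
      rw [← hSsub T₁ T₂ hT₂1, Finset.mul_sum]
      refine Finset.sum_le_sum fun t htm => ?_
      have := hx2 t (Finset.mem_Ico.mp htm).1
      linarith
    have h3 : Real.log (p T₂) ≤ 0 := Real.log_nonpos (hppos T₂).le (hple T₂)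
    have h5 : η * δ / 2 * (2 / (η * δ) * (E₀ - Real.log (p T₁) + 1))
        < η * δ / 2 * (S T₂ - S T₁) := by
      refine mul_lt_mul_of_pos_left ?_ (by positivity)
      linarith
    have h6 : η * δ / 2 * (2 / (η * δ) * (E₀ - Real.log (p T₁) + 1))
        = E₀ - Real.log (p T₁) + 1 := by
      rw [show η * δ / 2 * (2 / (η * δ) * (E₀ - Real.log (p T₁) + 1))
          = (η * δ / (η * δ)) * (E₀ - Real.log (p T₁) + 1) by ring,
        div_self hηδ.ne', one_mul]
    linarith
end
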